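/- arXiv:2205.15205 — 8 statements merged into one kernel-verified Lean document; each statement's English description precedes it below -/
import Mathlib

section
/- Let G be a finite group and let N be a normal regular subgroup of Hol(G). For each x ∈ G let n_x denote the unique element of N with n_x(1) = x, and define γ(x): G → G by γ(x)(z) = n_x(z)·x⁻¹. Then: (i) γ(x) is an automorphism of G for every x ∈ G; (ii) γ(xy)(z) = γ(x)(γ(y)(z)) for all x, y, z ∈ G (i.e., γ is an anti-homomorphism G → Aut(G) in the left-to-right composition convention); (iii) γ(β(x))(β(z)) = β(γ(x)(z)) for all x, z ∈ G and every automorphism β of G. -/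
/-- The image of the right regular representation `ρ : G → S(G)`, `ρ(y)(x) = x·y`,
as a subgroup of the symmetric group on `G`. -/
def RhoSubgroup (G : Type*) [Group G] : Subgroup (Equiv.Perm G) where
  carrier := {f : Equiv.Perm G | ∃ y : G, ∀ x : G, f x = x * y}
  one_mem' := ⟨1, fun x => (mul_one x).symm⟩
  mul_mem' := by
    rintro f g ⟨a, ha⟩ ⟨b, hb⟩
    refine ⟨b * a, fun x => ?_⟩
    simp only [Equiv.Perm.mul_apply, ha, hb, mul_assoc]
  inv_mem' := by
    rintro f ⟨a, ha⟩
    refine ⟨a⁻¹, fun x => ?_⟩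
    have h : f (x * a⁻¹) = x := by rw [ha]; simp
    conv_lhs => rw [← h]
    simp

/-- The holomorph `Hol(G) = N_{S(G)}(ρ(G))`. -/
def Hol (G : Type*) [Group G] : Subgroup (Equiv.Perm G) := Subgroup.normalizer (RhoSubgroup G : Set (Equiv.Perm G))

/-
Elements of `Hol G` satisfy `π(zy) = π(z) π(1)⁻¹ π(y)`; for `n_x` this says exactly that
`z ↦ n_x(z) x⁻¹` is an endomorphism.  The conjugates `ρ(y) n_x ρ(y)⁻¹ n_y` and `β n_x β⁻¹` lie in
`N` by normality and send `1` to `xy` and `β x`, so regularity identifies them with `n_{xy}` and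
`n_{β x}`, which gives (ii) and (iii).
-/

section

variable {G : Type*} [Group G]

lemma mem_rhoSubgroup_iff {f : Equiv.Perm G} :
    f ∈ RhoSubgroup G ↔ ∃ y : G, Equiv.mulRight y = f := by
  simp only [RhoSubgroup, Subgroup.mem_mk, Submonoid.mem_mk, Subsemigroup.mem_mk,
    Set.mem_ofPred_eq, Equiv.ext_iff, Equiv.coe_mulRight, eq_comm]

lemma mulRight_mem_rhoSubgroup (y : G) : (Equiv.mulRight y : Equiv.Perm G) ∈ RhoSubgroup G :=
  mem_rhoSubgroup_iff.mpr ⟨y, rfl⟩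

lemma mulRight_mem_hol (y : G) : (Equiv.mulRight y : Equiv.Perm G) ∈ Hol G :=
  Subgroup.le_normalizer (mulRight_mem_rhoSubgroup y)

lemma MulEquiv.toEquiv_mul_mulRight_mul_inv (β : G ≃* G) (y : G) :
    β.toEquiv * Equiv.mulRight y * β.toEquiv⁻¹ = Equiv.mulRight (β y) := by
  ext w
  simp [Equiv.Perm.mul_apply, Equiv.Perm.inv_def]

lemma MulEquiv.toEquiv_mem_hol (β : G ≃* G) : β.toEquiv ∈ Hol G := by
  refine Subgroup.mem_normalizer_iff.mpr fun f => ?_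
  simp only [mem_rhoSubgroup_iff]
  constructor
  · rintro ⟨y, rfl⟩
    exact ⟨β y, (β.toEquiv_mul_mulRight_mul_inv y).symm⟩
  · rintro ⟨y, hy⟩
    refine ⟨β.symm y, ?_⟩
    rw [← β.symm.toEquiv_mul_mulRight_mul_inv, hy]
    ext w
    simp [Equiv.Perm.mul_apply, Equiv.Perm.inv_def]

lemma map_mul_of_mem_hol {π : Equiv.Perm G} (hπ : π ∈ Hol G) (z y : G) :
    π (z * y) = π z * ((π 1)⁻¹ * π y) := by
  obtain ⟨c, hc⟩ := mem_rhoSubgroup_iff.mp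
    ((Subgroup.mem_normalizer_iff.mp hπ _).mp (mulRight_mem_rhoSubgroup y))
  have hπc : ∀ w : G, π (w * y) = π w * c := fun w => by
    simpa [Equiv.Perm.mul_apply] using (Equiv.ext_iff.mp hc (π w)).symm
  have hc1 : c = (π 1)⁻¹ * π y := by rw [← one_mul y, hπc 1]; group
  rw [hπc, hc1]

end

theorem stmt_2_general {G : Type*} [Group G]
    (N : Subgroup (Equiv.Perm G)) (hle : N ≤ Hol G)
    (hnormal : (N.subgroupOf (Hol G)).Normal)
    (hreg : ∀ x y : G, ∃! f : Equiv.Perm G, f ∈ N ∧ f x = y)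
    (nn : G → Equiv.Perm G) (hmem : ∀ x : G, nn x ∈ N) (hone : ∀ x : G, nn x 1 = x) :
    (∀ x : G, Function.Bijective (fun z : G => nn x z * x⁻¹) ∧
      ∀ a b : G, nn x (a * b) * x⁻¹ = (nn x a * x⁻¹) * (nn x b * x⁻¹)) ∧
    (∀ x y z : G, nn (x * y) z * (x * y)⁻¹ = nn x (nn y z * y⁻¹) * x⁻¹) ∧
    (∀ (β : G ≃* G) (x z : G), nn (β x) (β z) * (β x)⁻¹ = β (nn x z * x⁻¹)) := by
  have hnn : ∀ f ∈ N, nn (f 1) = f := fun f hf =>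
    (hreg 1 (f 1)).unique ⟨hmem _, hone _⟩ ⟨hf, rfl⟩
  have hconj := (Subgroup.normal_subgroupOf_iff hle).mp hnormal
  refine ⟨fun x => ⟨((nn x).trans (Equiv.mulRight x⁻¹)).bijective, fun a b => ?_⟩,
    fun x y z => ?_, fun β x z => ?_⟩
  · rw [map_mul_of_mem_hol (hle (hmem x)), hone]
    group
  · have hxy : nn (x * y) = Equiv.mulRight y * nn x * (Equiv.mulRight y)⁻¹ * nn y := by
      simpa [Equiv.Perm.mul_apply, Equiv.Perm.inv_def, hone] using
        hnn _ (N.mul_mem (hconj _ _ (hmem x) (mulRight_mem_hol y)) (hmem y))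
    simp [hxy, Equiv.Perm.mul_apply, Equiv.Perm.inv_def, mul_assoc]
  · have hβx : nn (β x) = β.toEquiv * nn x * β.toEquiv⁻¹ := by
      simpa [Equiv.Perm.mul_apply, Equiv.Perm.inv_def, hone] using
        hnn _ (hconj _ _ (hmem x) β.toEquiv_mem_hol)
    simp [hβx, Equiv.Perm.mul_apply, Equiv.Perm.inv_def]

/-- for a normal regular subgroup `N` of `Hol(G)`, writing `n_x` for the
unique element of `N` with `n_x(1) = x` and `γ(x)(z) = n_x(z)·x⁻¹`, the map `γ(x)` is an
automorphism of `G` for every `x`, `γ` is an anti-homomorphism `G → Aut(G)` (in the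
left-to-right composition convention), and `γ` is `Aut(G)`-equivariant. -/
theorem stmt_2 {G : Type*} [Group G] [Fintype G]
    (N : Subgroup (Equiv.Perm G)) (hle : N ≤ Hol G)
    (hnormal : (N.subgroupOf (Hol G)).Normal)
    (hreg : ∀ x y : G, ∃! f : Equiv.Perm G, f ∈ N ∧ f x = y)
    (nn : G → Equiv.Perm G) (hmem : ∀ x : G, nn x ∈ N) (hone : ∀ x : G, nn x 1 = x) :
    (∀ x : G, Function.Bijective (fun z : G => nn x z * x⁻¹) ∧
      ∀ a b : G, nn x (a * b) * x⁻¹ = (nn x a * x⁻¹) * (nn x b * x⁻¹)) ∧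
    (∀ x y z : G, nn (x * y) z * (x * y)⁻¹ = nn x (nn y z * y⁻¹) * x⁻¹) ∧
    (∀ (β : G ≃* G) (x z : G), nn (β x) (β z) * (β x)⁻¹ = β (nn x z * x⁻¹)) :=
  stmt_2_general N hle hnormal hreg nn hmem hone
end

section
/- Let G be a finite group and let γ: G → Aut(G) be a map satisfying γ(xy)(z) = γ(x)(γ(y)(z)) for all x, y, z ∈ G and γ(β(x))(β(z)) = β(γ(x)(z)) for all x, z ∈ G and all automorphisms β of G. Define x ∘ y = γ(y)(x)·y. Then: (i) ∘ is a group operation on the underlying set of G whose identity element coincides with the identity of G; (ii) every automorphism β of G satisfies β(x ∘ y) = β(x) ∘ β(y) for all x, y ∈ G; and (iii) (x·y) ∘ z = (x ∘ z)·z⁻¹·(y ∘ z) for all x, y, z ∈ G, where z⁻¹ denotes the inverse of z in G. -/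
/-- The circle operation `x ∘ y = γ(y)(x) · y` associated to a map `γ : G → Aut(G)`. -/
def circOp {G : Type*} [Group G] (γ : G → G ≃* G) (x y : G) : G := γ y x * y

/-!
Equivariance under the automorphism `γ(z)` gives `γ(γ(z)(y)) * γ(z) = γ(z) * γ(y)` in `Aut(G)`, which
together with `γ(xy) = γ(x) * γ(y)` is exactly what associativity of `∘` needs. The `∘`-inverse of
`x` is `γ(x⁻¹)(x⁻¹)`.
-/

section CircOp

variable {G : Type*} [Group G] {γ : G → G ≃* G}

theorem gamma_one_apply (h1 : ∀ x y z : G, γ (x * y) z = γ x (γ y z)) (z : G) : γ 1 z = z :=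
  (γ 1).injective (by rw [← h1, one_mul])

theorem gamma_inv_apply_apply (h1 : ∀ x y z : G, γ (x * y) z = γ x (γ y z)) (x z : G) :
    γ x⁻¹ (γ x z) = z := by
  rw [← h1, inv_mul_cancel, gamma_one_apply h1]

theorem gamma_apply_inv_apply (h1 : ∀ x y z : G, γ (x * y) z = γ x (γ y z)) (x z : G) :
    γ x (γ x⁻¹ z) = z := by
  simpa using gamma_inv_apply_apply h1 x⁻¹ z

theorem circOp_assoc (h1 : ∀ x y z : G, γ (x * y) z = γ x (γ y z))
    (h2 : ∀ (β : G ≃* G) (x z : G), γ (β x) (β z) = β (γ x z)) (x y z : G) :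
    circOp γ (circOp γ x y) z = circOp γ x (circOp γ y z) := by
  have key : γ (γ z y * z) x = γ z (γ y x) := by rw [h1, h2]
  simp only [circOp, map_mul, key, mul_assoc]

theorem one_circOp (x : G) : circOp γ 1 x = x := by
  simp [circOp]

theorem circOp_one (h1 : ∀ x y z : G, γ (x * y) z = γ x (γ y z)) (x : G) : circOp γ x 1 = x := by
  simp [circOp, gamma_one_apply h1]

theorem circOp_gamma_inv_inv (h1 : ∀ x y z : G, γ (x * y) z = γ x (γ y z))
    (h2 : ∀ (β : G ≃* G) (x z : G), γ (β x) (β z) = β (γ x z)) (x : G) :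
    circOp γ x (γ x⁻¹ x⁻¹) = 1 := by
  have hγ : γ (γ x⁻¹ x⁻¹) x = γ x⁻¹ x := by
    calc γ (γ x⁻¹ x⁻¹) x = γ (γ x⁻¹ x⁻¹) (γ x⁻¹ (γ x x)) := by rw [gamma_inv_apply_apply h1]
      _ = γ x⁻¹ x := by rw [h2, gamma_inv_apply_apply h1]
  rw [circOp, hγ, ← map_mul, mul_inv_cancel, map_one]

theorem gamma_inv_inv_circOp (h1 : ∀ x y z : G, γ (x * y) z = γ x (γ y z)) (x : G) :
    circOp γ (γ x⁻¹ x⁻¹) x = 1 := by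
  rw [circOp, gamma_apply_inv_apply h1, inv_mul_cancel]

theorem map_circOp (h2 : ∀ (β : G ≃* G) (x z : G), γ (β x) (β z) = β (γ x z))
    (β : G ≃* G) (x y : G) : β (circOp γ x y) = circOp γ (β x) (β y) := by
  rw [circOp, circOp, map_mul, h2]

theorem mul_circOp (x y z : G) : circOp γ (x * y) z = circOp γ x z * z⁻¹ * circOp γ y z := by
  simp [circOp, mul_assoc]

end CircOp

theorem stmt_3_general {G : Type*} [Group G] (γ : G → G ≃* G)
    (h1 : ∀ x y z : G, γ (x * y) z = γ x (γ y z))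
    (h2 : ∀ (β : G ≃* G) (x z : G), γ (β x) (β z) = β (γ x z)) :
    ((∀ x y z : G, circOp γ (circOp γ x y) z = circOp γ x (circOp γ y z)) ∧
      (∀ x : G, circOp γ 1 x = x) ∧ (∀ x : G, circOp γ x 1 = x) ∧
      (∀ x : G, ∃ y : G, circOp γ x y = 1 ∧ circOp γ y x = 1)) ∧
    (∀ (β : G ≃* G) (x y : G), β (circOp γ x y) = circOp γ (β x) (β y)) ∧
    (∀ x y z : G, circOp γ (x * y) z = circOp γ x z * z⁻¹ * circOp γ y z) :=
  ⟨⟨circOp_assoc h1 h2, one_circOp, circOp_one h1,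
      fun x => ⟨γ x⁻¹ x⁻¹, circOp_gamma_inv_inv h1 h2 x, gamma_inv_inv_circOp h1 x⟩⟩,
    map_circOp h2, mul_circOp⟩

/-- if `γ : G → Aut(G)` is an anti-homomorphism (in the left-to-right
composition convention) that is equivariant with respect to `Aut(G)`, then
`x ∘ y = γ(y)(x)·y` is a group operation on `G` with the same identity as `G`,
every automorphism of `G` is an automorphism of `(G, ∘)`, and
`(x·y) ∘ z = (x ∘ z)·z⁻¹·(y ∘ z)`. -/
theorem stmt_3 {G : Type*} [Group G] [Fintype G] (γ : G → G ≃* G)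
    (h1 : ∀ x y z : G, γ (x * y) z = γ x (γ y z))
    (h2 : ∀ (β : G ≃* G) (x z : G), γ (β x) (β z) = β (γ x z)) :
    ((∀ x y z : G, circOp γ (circOp γ x y) z = circOp γ x (circOp γ y z)) ∧
      (∀ x : G, circOp γ 1 x = x) ∧ (∀ x : G, circOp γ x 1 = x) ∧
      (∀ x : G, ∃ y : G, circOp γ x y = 1 ∧ circOp γ y x = 1)) ∧
    (∀ (β : G ≃* G) (x y : G), β (circOp γ x y) = circOp γ (β x) (β y)) ∧
    (∀ x y z : G, circOp γ (x * y) z = circOp γ x z * z⁻¹ * circOp γ y z) :=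
  stmt_3_general γ h1 h2
end

section
/- Let G be a finite group and let N be a normal regular subgroup of Hol(G) which is isomorphic to G as an abstract group. For each y ∈ G let n_y denote the unique element of N with n_y(1) = y, and define x ∘ y = n_y(x). Then for any θ ∈ NHol(G) with θ(1) = 1, the following are equivalent: (a) θ(x·y) = θ(x) ∘ θ(y) for all x, y ∈ G (i.e., θ is an isomorphism from G to (G, ∘)); (b) the conjugate of ρ(G) by θ equals N, that is, {the permutation z ↦ θ(θ⁻¹(z)·y) : y ∈ G} = N. -/
/-- The multiple holomorph `NHol(G) = N_{S(G)}(Hol(G))`. -/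
def NHol (G : Type*) [Group G] : Subgroup (Equiv.Perm G) := Subgroup.normalizer (Hol G : Set (Equiv.Perm G))

instance holNormalInNHol (G : Type*) [Group G] : ((Hol G).subgroupOf (NHol G)).Normal :=
  Subgroup.normal_in_normalizer (H := Hol G)

/-- The quotient `T(G) = NHol(G)/Hol(G)`. -/
abbrev THol (G : Type*) [Group G] : Type _ := NHol G ⧸ (Hol G).subgroupOf (NHol G)

/-!
By regularity an element of `N` is determined by its value at `1`, so `N = {n_y : y ∈ G}`.
Substituting `x = θ⁻¹ z`, condition (a) says exactly that `n_{θ y}` is the conjugate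
`z ↦ θ(θ⁻¹(z)·y)` of `ρ(y)` by `θ`; since `θ(1) = 1` this conjugate sends `1` to `θ y`,
so (a) and (b) are two descriptions of the same bijection `y ↦ n_{θ y}` from `ρ(G)` onto `N`.
-/

open Equiv

section RegularAt

variable {α : Type*} {N : Subgroup (Perm α)} {a : α}
  (huniq : ∀ y, ∃! f : Perm α, f ∈ N ∧ f a = y)
  {nn : α → Perm α} (hmem : ∀ y, nn y ∈ N) (hval : ∀ y, nn y a = y)
include huniq hmem hval

theorem eq_of_mem_of_apply_eq {f : Perm α} {y : α} (hf : f ∈ N) (hfy : f a = y) : f = nn y :=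
  (huniq y).unique ⟨hf, hfy⟩ ⟨hmem y, hval y⟩

theorem mem_iff_exists_eq {f : Perm α} : f ∈ N ↔ ∃ y, f = nn y :=
  ⟨fun hf => ⟨f a, eq_of_mem_of_apply_eq huniq hmem hval hf rfl⟩,
    by rintro ⟨y, rfl⟩; exact hmem y⟩

end RegularAt

/-- The conjugate `θ⁻¹ ρ(y) θ` in the left-to-right convention of the paper. -/
def conjMulRight {G : Type*} [Group G] (θ : Perm G) (y : G) : Perm G :=
  θ * Equiv.mulRight y * θ⁻¹

section ConjMulRight

variable {G : Type*} [Group G]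

theorem conjMulRight_apply (θ : Perm G) (y z : G) : conjMulRight θ y z = θ (θ⁻¹ z * y) := rfl

theorem conjMulRight_apply_one {θ : Perm G} (hθ1 : θ 1 = 1) (y : G) :
    conjMulRight θ y 1 = θ y := by
  rw [conjMulRight_apply, Perm.inv_eq_iff_eq.mpr hθ1.symm, one_mul]

theorem map_mul_iff_forall_eq_conjMulRight (θ : Perm G) (nn : G → Perm G) :
    (∀ x y : G, θ (x * y) = nn (θ y) (θ x)) ↔ ∀ y, nn (θ y) = conjMulRight θ y := by
  rw [forall_comm]
  refine forall_congr' fun y => ?_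
  rw [Equiv.ext_iff]
  refine Iff.trans ?_ θ.forall_congr_right
  simp only [conjMulRight_apply, Perm.coe_inv, symm_apply_apply, eq_comm]

end ConjMulRight

theorem stmt_5_general {G : Type*} [Group G]
    (N : Subgroup (Equiv.Perm G))
    (hreg : ∀ x y : G, ∃! f : Equiv.Perm G, f ∈ N ∧ f x = y)
    (nn : G → Equiv.Perm G) (hmem : ∀ y : G, nn y ∈ N) (hone : ∀ y : G, nn y 1 = y)
    (θ : Equiv.Perm G) (hθ1 : θ 1 = 1) :
    (∀ x y : G, θ (x * y) = nn (θ y) (θ x)) ↔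
      (∀ f : Equiv.Perm G, f ∈ N ↔ ∃ y : G, ∀ z : G, f z = θ (θ⁻¹ z * y)) := by
  simp only [← conjMulRight_apply, ← Equiv.ext_iff]
  rw [map_mul_iff_forall_eq_conjMulRight]
  constructor
  · intro h f
    rw [mem_iff_exists_eq (hreg 1) hmem hone, ← θ.exists_congr_right]
    simp only [h]
  · intro h y
    exact (eq_of_mem_of_apply_eq (hreg 1) hmem hone
      ((h _).mpr ⟨y, rfl⟩) (conjMulRight_apply_one hθ1 y)).symm

/-- let `N` be a normal regular subgroup of `Hol(G)` isomorphic to `G`,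
let `n_y` be the unique element of `N` with `n_y(1) = y`, and let `x ∘ y = n_y(x)`.
For `θ ∈ NHol(G)` with `θ(1) = 1`, `θ` is an isomorphism `G → (G, ∘)` if and only if
`θ` conjugates `ρ(G)` to `N` (in the left-to-right composition convention, the conjugate
`θ⁻¹ρ(y)θ` is the permutation `z ↦ θ(θ⁻¹(z)·y)`). -/
theorem stmt_5 {G : Type*} [Group G] [Fintype G]
    (N : Subgroup (Equiv.Perm G)) (hle : N ≤ Hol G)
    (hnormal : (N.subgroupOf (Hol G)).Normal)
    (hreg : ∀ x y : G, ∃! f : Equiv.Perm G, f ∈ N ∧ f x = y)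
    (hiso : Nonempty (G ≃* ↥N))
    (nn : G → Equiv.Perm G) (hmem : ∀ y : G, nn y ∈ N) (hone : ∀ y : G, nn y 1 = y)
    (θ : Equiv.Perm G) (hθ : θ ∈ NHol G) (hθ1 : θ 1 = 1) :
    (∀ x y : G, θ (x * y) = nn (θ y) (θ x)) ↔
      (∀ f : Equiv.Perm G, f ∈ N ↔ ∃ y : G, ∀ z : G, f z = θ (θ⁻¹ z * y)) :=
  stmt_5_general N hreg nn hmem hone θ hθ1
end

section
/- Let p be an odd prime and let G be a finite p-group of nilpotency class two. Let N be a normal regular subgroup of Hol(G); for each x ∈ G let n_x denote the unique element of N with n_x(1) = x, and define γ(x): G → G by γ(x)(z) = n_x(z)·x⁻¹ (so each γ(x) ∈ Aut(G)). Assume that for every x ∈ G the automorphism γ(x) induces the identity on G/Z(G) and on Z(G), i.e., γ(x)(g)·g⁻¹ ∈ Z(G) for all g ∈ G and γ(x)(z) = z for all z ∈ Z(G). Define Δ(x, y) = x⁻¹·γ(y)(x). Then: Δ takes values in Z(G); Δ(xz, y) = Δ(x, y) for all z ∈ Z(G) and Δ(x, yw) = Δ(x, y) for all w ∈ G'; Δ(x₁x₂,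 y) = Δ(x₁, y)Δ(x₂, y) and Δ(x, y₁y₂) = Δ(x, y₁)Δ(x, y₂) for all x, x₁, x₂, y, y₁, y₂ ∈ G; Δ(β(x), β(y)) = β(Δ(x, y)) for all x, y ∈ G and all automorphisms β of G; and n_y(x) = x·y·Δ(x, y) for all x, y ∈ G. -/
/-- The bilinear form `Δ(x, y) = x⁻¹ · γ(y)(x) = x⁻¹ · (n_y(x)·y⁻¹)` associated to a
normal regular subgroup of the holomorph. -/
def DeltaOf {G : Type*} [Group G] (nn : G → Equiv.Perm G) (x y : G) : G :=
  x⁻¹ * (nn y x * y⁻¹)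

open Subgroup
open scoped commutatorElement

theorem commutator_le_center_of_lowerCentralSeries_two_eq_bot {G : Type*} [Group G]
    (h : (⊤ : Subgroup G).lowerCentralSeries 2 = ⊥) : commutator G ≤ center G := by
  rwa [Subgroup.lowerCentralSeries_succ, top_lowerCentralSeries_one,
    commutator_eq_bot_iff_le_centralizer, coe_top, centralizer_univ] at h

namespace Hol

variable {G : Type*} [Group G]

theorem mulRight_mem (g : G) : Equiv.mulRight g ∈ Hol G :=
  le_normalizer ⟨g, fun _ => rfl⟩

theorem mulEquiv_mem (β : G ≃* G) : (β.toEquiv : Equiv.Perm G) ∈ Hol G := by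
  refine fun n => ⟨fun ⟨a, ha⟩ => ⟨β a, fun x => ?_⟩, fun ⟨a, ha⟩ => ⟨β.symm a, fun x => ?_⟩⟩
  · change β (n (β.symm x)) = x * β a
    rw [ha, map_mul, MulEquiv.apply_symm_apply]
  · have h := ha (β x)
    change β (n (β.symm (β x))) = β x * a at h
    rw [MulEquiv.symm_apply_apply, ← β.eq_symm_apply, map_mul, MulEquiv.symm_apply_apply] at h
    exact h

/-- Conjugating `ρ(b)` by `f ∈ Hol G` gives some `ρ(c)`; evaluating at `1` identifies `c`. -/
theorem apply_mul {f : Equiv.Perm G} (hf : f ∈ Hol G) (a b : G) :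
    f (a * b) = f a * ((f 1)⁻¹ * f b) := by
  obtain ⟨c, hc⟩ := (hf (Equiv.mulRight b)).mp ⟨b, fun _ => rfl⟩
  have key : ∀ u, f (u * b) = f u * c := fun u => by simpa using hc (f u)
  have hb : f b = f 1 * c := by simpa using key 1
  rw [key, hb, inv_mul_cancel_left]

end Hol

theorem mul_right_comm_of_mem_center {G : Type*} [Group G] {c : G} (hc : c ∈ center G)
    (a b : G) : a * c * b = a * b * c := by
  rw [mul_assoc, ← mem_center_iff.mp hc b, mul_assoc]

def gammaOf {G : Type*} [Group G] (nn : G → Equiv.Perm G) (y z : G) : G :=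
  nn y z * y⁻¹

section Delta

variable {G : Type*} [Group G] {nn : G → Equiv.Perm G}

theorem mul_deltaOf (x y : G) : x * DeltaOf nn x y = gammaOf nn y x :=
  mul_inv_cancel_left x _

theorem deltaOf_eq_gammaOf_mul_inv (hγ : ∀ y g : G, gammaOf nn y g * g⁻¹ ∈ center G) (x y : G) :
    DeltaOf nn x y = gammaOf nn y x * x⁻¹ := by
  refine mul_left_cancel (a := x) ?_
  rw [mul_deltaOf, mem_center_iff.mp (hγ y x) x, inv_mul_cancel_right]

theorem deltaOf_mem_center (hγ : ∀ y g : G, gammaOf nn y g * g⁻¹ ∈ center G) (x y : G) :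
    DeltaOf nn x y ∈ center G :=
  deltaOf_eq_gammaOf_mul_inv hγ x y ▸ hγ y x

theorem apply_eq_mul_mul_deltaOf (hγ : ∀ y g : G, gammaOf nn y g * g⁻¹ ∈ center G) (x y : G) :
    nn y x = x * y * DeltaOf nn x y := by
  rw [← mul_right_comm_of_mem_center (deltaOf_mem_center hγ x y), mul_deltaOf, gammaOf,
    inv_mul_cancel_right]

theorem deltaOf_eq_one_of_mem_center (hγZ : ∀ y z : G, z ∈ center G → gammaOf nn y z = z)
    {z : G} (hz : z ∈ center G) (y : G) : DeltaOf nn z y = 1 := by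
  rw [DeltaOf, ← gammaOf, hγZ y z hz, inv_mul_cancel]

end Delta

/-- `nn x` is the element of the normal regular subgroup `N` of `Hol G` with `nn x 1 = x`. -/
structure IsNormalRegularParam {G : Type*} [Group G] (N : Subgroup (Equiv.Perm G))
    (nn : G → Equiv.Perm G) : Prop where
  le_hol : N ≤ Hol G
  normal : (N.subgroupOf (Hol G)).Normal
  regular : ∀ x y : G, ∃! f : Equiv.Perm G, f ∈ N ∧ f x = y
  mem : ∀ x, nn x ∈ N
  apply_one : ∀ x, nn x 1 = x

namespace IsNormalRegularParam

variable {G : Type*} [Group G] {N : Subgroup (Equiv.Perm G)} {nn : G → Equiv.Perm G}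

theorem eq_of_mem (hN : IsNormalRegularParam N nn) {f : Equiv.Perm G} (hf : f ∈ N) :
    f = nn (f 1) :=
  (hN.regular 1 (f 1)).unique ⟨hf, rfl⟩ ⟨hN.mem _, hN.apply_one _⟩

theorem conj_eq (hN : IsNormalRegularParam N nn) {g : Equiv.Perm G} (hg : g ∈ Hol G) (y : G) :
    g * nn y * g⁻¹ = nn (g (nn y (g⁻¹ 1))) :=
  hN.eq_of_mem <| mem_subgroupOf.mp <| hN.normal.conj_mem ⟨nn y, hN.le_hol (hN.mem y)⟩
    (mem_subgroupOf.mpr (hN.mem y)) ⟨g, hg⟩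

theorem gammaOf_mul (hN : IsNormalRegularParam N nn) (y a b : G) :
    gammaOf nn y (a * b) = gammaOf nn y a * gammaOf nn y b := by
  simp only [gammaOf, Hol.apply_mul (hN.le_hol (hN.mem y)), hN.apply_one]
  group

theorem gammaOf_apply (hN : IsNormalRegularParam N nn) (y₁ y₂ x : G) :
    gammaOf nn (nn y₂ y₁) x = gammaOf nn y₂ (gammaOf nn y₁ x) := by
  have hw : nn y₂ * nn y₁ = nn (nn y₂ y₁) := by
    simpa [hN.apply_one] using hN.eq_of_mem (mul_mem (hN.mem y₂) (hN.mem y₁))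
  have hx : nn y₁ x = gammaOf nn y₁ x * y₁ := (inv_mul_cancel_right _ _).symm
  rw [gammaOf, ← hw, Equiv.Perm.mul_apply, hx, Hol.apply_mul (hN.le_hol (hN.mem y₂)),
    hN.apply_one, ← mul_assoc, mul_inv_cancel_right]
  rfl

theorem gammaOf_map (hN : IsNormalRegularParam N nn) (β : G ≃* G) (x y : G) :
    gammaOf nn (β y) (β x) = β (gammaOf nn y x) := by
  have hβ : (β.toEquiv : Equiv.Perm G) * nn y * β.toEquiv⁻¹ = nn (β y) := by
    simpa [hN.apply_one] using hN.conj_eq (Hol.mulEquiv_mem β) y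
  rw [gammaOf, gammaOf, map_mul, map_inv, ← hβ]
  simp

theorem gammaOf_mul_inv (hN : IsNormalRegularParam N nn) (a y : G) :
    gammaOf nn (nn y a * a⁻¹) = gammaOf nn y := by
  have hr : Equiv.mulRight a⁻¹ * nn y * (Equiv.mulRight a⁻¹)⁻¹ = nn (nn y a * a⁻¹) := by
    simpa using hN.conj_eq (Hol.mulRight_mem a⁻¹) y
  funext x
  have hx := congrArg (· x) hr
  simp only [Equiv.Perm.mul_apply, Equiv.Perm.inv_def, Equiv.mulRight_symm, Equiv.coe_mulRight,
    inv_inv, Hol.apply_mul (hN.le_hol (hN.mem y)), hN.apply_one] at hx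
  rw [gammaOf, gammaOf, ← hx]
  group

theorem deltaOf_mul_left (hN : IsNormalRegularParam N nn)
    (hγ : ∀ y g : G, gammaOf nn y g * g⁻¹ ∈ center G) (x₁ x₂ y : G) :
    DeltaOf nn (x₁ * x₂) y = DeltaOf nn x₁ y * DeltaOf nn x₂ y := by
  refine mul_left_cancel (a := x₁ * x₂) ?_
  rw [mul_deltaOf (x₁ * x₂), hN.gammaOf_mul, ← mul_deltaOf x₁, ← mul_deltaOf x₂, ← mul_assoc,
    mul_right_comm_of_mem_center (deltaOf_mem_center hγ x₁ y) x₁ x₂, mul_assoc]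

theorem deltaOf_mul_center_left (hN : IsNormalRegularParam N nn)
    (hγ : ∀ y g : G, gammaOf nn y g * g⁻¹ ∈ center G)
    (hγZ : ∀ y z : G, z ∈ center G → gammaOf nn y z = z) (x : G) {z : G} (hz : z ∈ center G)
    (y : G) : DeltaOf nn (x * z) y = DeltaOf nn x y := by
  rw [hN.deltaOf_mul_left hγ, deltaOf_eq_one_of_mem_center hγZ hz, mul_one]

theorem map_deltaOf (hN : IsNormalRegularParam N nn) (β : G ≃* G) (x y : G) :
    DeltaOf nn (β x) (β y) = β (DeltaOf nn x y) := by
  refine mul_left_cancel (a := β x) ?_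
  rw [mul_deltaOf, hN.gammaOf_map, ← mul_deltaOf, map_mul]

theorem deltaOf_apply_right (hN : IsNormalRegularParam N nn)
    (hγ : ∀ y g : G, gammaOf nn y g * g⁻¹ ∈ center G)
    (hγZ : ∀ y z : G, z ∈ center G → gammaOf nn y z = z) (x y₁ y₂ : G) :
    DeltaOf nn x (nn y₂ y₁) = DeltaOf nn x y₁ * DeltaOf nn x y₂ := by
  have hΔ := deltaOf_mem_center hγ x y₁
  refine mul_left_cancel (a := x) ?_
  rw [mul_deltaOf, hN.gammaOf_apply, ← mul_deltaOf x y₁, hN.gammaOf_mul, hγZ y₂ _ hΔ,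
    ← mul_deltaOf x y₂, mul_assoc x (DeltaOf nn x y₂), mem_center_iff.mp hΔ]

theorem deltaOf_center_mul_right (hN : IsNormalRegularParam N nn)
    (hγ : ∀ y g : G, gammaOf nn y g * g⁻¹ ∈ center G)
    (hγZ : ∀ y z : G, z ∈ center G → gammaOf nn y z = z) (x : G) {c : G} (hc : c ∈ center G)
    (y : G) : DeltaOf nn x (c * y) = DeltaOf nn x c * DeltaOf nn x y := by
  have hcy : nn y c = c * y := mul_inv_eq_iff_eq_mul.mp (hγZ y c hc)
  rw [← hcy, hN.deltaOf_apply_right hγ hγZ]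

theorem deltaOf_conj_right (hN : IsNormalRegularParam N nn)
    (hγ : ∀ y g : G, gammaOf nn y g * g⁻¹ ∈ center G)
    (hγZ : ∀ y z : G, z ∈ center G → gammaOf nn y z = z) (hG' : commutator G ≤ center G)
    (x y g : G) : DeltaOf nn x (g * y * g⁻¹) = DeltaOf nn x y := by
  have hx : g * x * g⁻¹ = x * ⁅x⁻¹, g⁆ := by rw [commutatorElement_def]; group
  have hc : ⁅x⁻¹, g⁆ ∈ center G := hG' (commutator_mem_commutator (mem_top _) (mem_top _))
  have h := hN.map_deltaOf (MulAut.conj g) x y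
  simp only [MulAut.conj_apply] at h
  rwa [hx, hN.deltaOf_mul_center_left hγ hγZ x hc,
    mem_center_iff.mp (deltaOf_mem_center hγ x y) g, mul_inv_cancel_right] at h

theorem deltaOf_mul_inv_right (hN : IsNormalRegularParam N nn) (x a y : G) :
    DeltaOf nn x (nn y a * a⁻¹) = DeltaOf nn x y := by
  refine mul_left_cancel (a := x) ?_
  rw [mul_deltaOf, mul_deltaOf, hN.gammaOf_mul_inv]

theorem deltaOf_deltaOf_right (hN : IsNormalRegularParam N nn)
    (hγ : ∀ y g : G, gammaOf nn y g * g⁻¹ ∈ center G)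
    (hγZ : ∀ y z : G, z ∈ center G → gammaOf nn y z = z) (hG' : commutator G ≤ center G)
    (x a y : G) : DeltaOf nn x (DeltaOf nn a y) = 1 := by
  have hΔ := deltaOf_mem_center hγ a y
  have h := hN.deltaOf_mul_inv_right x a y
  rwa [apply_eq_mul_mul_deltaOf hγ, mul_assoc a, mem_center_iff.mp hΔ y,
    hN.deltaOf_conj_right hγ hγZ hG', hN.deltaOf_center_mul_right hγ hγZ x hΔ,
    mul_eq_right] at h

theorem deltaOf_mul_right (hN : IsNormalRegularParam N nn)
    (hγ : ∀ y g : G, gammaOf nn y g * g⁻¹ ∈ center G)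
    (hγZ : ∀ y z : G, z ∈ center G → gammaOf nn y z = z) (hG' : commutator G ≤ center G)
    (x y₁ y₂ : G) : DeltaOf nn x (y₁ * y₂) = DeltaOf nn x y₁ * DeltaOf nn x y₂ := by
  have hΔ := deltaOf_mem_center hγ y₁ y₂
  rw [← hN.deltaOf_apply_right hγ hγZ, apply_eq_mul_mul_deltaOf hγ, mem_center_iff.mp hΔ,
    hN.deltaOf_center_mul_right hγ hγZ x hΔ, hN.deltaOf_deltaOf_right hγ hγZ hG', one_mul]

open scoped IsMulCommutative in
theorem deltaOf_eq_one_of_mem_commutator (hN : IsNormalRegularParam N nn)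
    (hγ : ∀ y g : G, gammaOf nn y g * g⁻¹ ∈ center G)
    (hγZ : ∀ y z : G, z ∈ center G → gammaOf nn y z = z) (hG' : commutator G ≤ center G)
    (x : G) {w : G} (hw : w ∈ commutator G) : DeltaOf nn x w = 1 := by
  let φ : G →* center G :=
    (MonoidHom.mk' (DeltaOf nn x) (hN.deltaOf_mul_right hγ hγZ hG' x)).codRestrict (center G)
      (deltaOf_mem_center hγ x)
  exact congrArg Subtype.val (Abelianization.commutator_subset_ker φ hw)

end IsNormalRegularParam

theorem stmt_6_general {G : Type*} [Group G]
    (hc2 : (⊤ : Subgroup G).lowerCentralSeries 2 = ⊥)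
    (N : Subgroup (Equiv.Perm G)) (hle : N ≤ Hol G)
    (hnormal : (N.subgroupOf (Hol G)).Normal)
    (hreg : ∀ x y : G, ∃! f : Equiv.Perm G, f ∈ N ∧ f x = y)
    (nn : G → Equiv.Perm G) (hmem : ∀ x : G, nn x ∈ N) (hone : ∀ x : G, nn x 1 = x)
    (hcentral : ∀ x g : G, (nn x g * x⁻¹) * g⁻¹ ∈ Subgroup.center G)
    (hfixZ : ∀ x z : G, z ∈ Subgroup.center G → nn x z * x⁻¹ = z) :
    (∀ x y : G, DeltaOf nn x y ∈ Subgroup.center G) ∧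
    (∀ x y z : G, z ∈ Subgroup.center G → DeltaOf nn (x * z) y = DeltaOf nn x y) ∧
    (∀ x y w : G, w ∈ commutator G → DeltaOf nn x (y * w) = DeltaOf nn x y) ∧
    (∀ x₁ x₂ y : G, DeltaOf nn (x₁ * x₂) y = DeltaOf nn x₁ y * DeltaOf nn x₂ y) ∧
    (∀ x y₁ y₂ : G, DeltaOf nn x (y₁ * y₂) = DeltaOf nn x y₁ * DeltaOf nn x y₂) ∧
    (∀ (β : G ≃* G) (x y : G), DeltaOf nn (β x) (β y) = β (DeltaOf nn x y)) ∧
    (∀ x y : G, nn y x = x * y * DeltaOf nn x y) := by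
  have hN : IsNormalRegularParam N nn := ⟨hle, hnormal, hreg, hmem, hone⟩
  have hG' := commutator_le_center_of_lowerCentralSeries_two_eq_bot hc2
  refine ⟨deltaOf_mem_center hcentral,
    fun x y z hz => hN.deltaOf_mul_center_left hcentral hfixZ x hz y, fun x y w hw => ?_,
    hN.deltaOf_mul_left hcentral, hN.deltaOf_mul_right hcentral hfixZ hG', hN.map_deltaOf,
    apply_eq_mul_mul_deltaOf hcentral⟩
  rw [hN.deltaOf_mul_right hcentral hfixZ hG',
    hN.deltaOf_eq_one_of_mem_commutator hcentral hfixZ hG' x hw, mul_one]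

/-- let `G` be a finite `p`-group of class two (`p` odd) and `N` a normal
regular subgroup of `Hol(G)`, with `n_x ∈ N` the unique element with `n_x(1) = x` and
`γ(x)(z) = n_x(z)·x⁻¹`.  If every `γ(x)` induces the identity on `G/Z(G)` and on `Z(G)`,
then `Δ(x, y) = x⁻¹·γ(y)(x)` takes values in `Z(G)`, only depends on `x mod Z(G)` and on
`y mod G'`, is multiplicative in each variable, is `Aut(G)`-equivariant, and satisfies
`n_y(x) = x·y·Δ(x, y)`. -/
theorem stmt_6 {p : ℕ} (hp : p.Prime) (hodd : Odd p)
    {G : Type*} [Group G] [Fintype G] (hpG : IsPGroup p G)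
    (hc2 : (⊤ : Subgroup G).lowerCentralSeries 2 = ⊥) (hc1 : (⊤ : Subgroup G).lowerCentralSeries 1 ≠ ⊥)
    (N : Subgroup (Equiv.Perm G)) (hle : N ≤ Hol G)
    (hnormal : (N.subgroupOf (Hol G)).Normal)
    (hreg : ∀ x y : G, ∃! f : Equiv.Perm G, f ∈ N ∧ f x = y)
    (nn : G → Equiv.Perm G) (hmem : ∀ x : G, nn x ∈ N) (hone : ∀ x : G, nn x 1 = x)
    (hcentral : ∀ x g : G, (nn x g * x⁻¹) * g⁻¹ ∈ Subgroup.center G)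
    (hfixZ : ∀ x z : G, z ∈ Subgroup.center G → nn x z * x⁻¹ = z) :
    (∀ x y : G, DeltaOf nn x y ∈ Subgroup.center G) ∧
    (∀ x y z : G, z ∈ Subgroup.center G → DeltaOf nn (x * z) y = DeltaOf nn x y) ∧
    (∀ x y w : G, w ∈ commutator G → DeltaOf nn x (y * w) = DeltaOf nn x y) ∧
    (∀ x₁ x₂ y : G, DeltaOf nn (x₁ * x₂) y = DeltaOf nn x₁ y * DeltaOf nn x₂ y) ∧
    (∀ x y₁ y₂ : G, DeltaOf nn x (y₁ * y₂) = DeltaOf nn x y₁ * DeltaOf nn x y₂) ∧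
    (∀ (β : G ≃* G) (x y : G), DeltaOf nn (β x) (β y) = β (DeltaOf nn x y)) ∧
    (∀ x y : G, nn y x = x * y * DeltaOf nn x y) :=
  stmt_6_general hc2 N hle hnormal hreg nn hmem hone hcentral hfixZ
end

section
/- Let p be an odd prime and let G be a finite p-group of nilpotency class two. Let Δ: G × G → Z(G) be a map such that: Δ(xz, y) = Δ(x, y) for all z ∈ Z(G); Δ(x, yw) = Δ(x, y) for all w ∈ G'; Δ(x₁x₂, y) = Δ(x₁, y)Δ(x₂, y) and Δ(x, y₁y₂) = Δ(x, y₁)Δ(x, y₂) for all x, x₁, x₂, y, y₁, y₂ ∈ G; and Δ(β(x), β(y)) = β(Δ(x, y)) for all x, y ∈ G and all automorphisms β of G. For each x ∈ G define the permutation ν(x) ∈ S(G) by ν(x)(z) = z·x·Δ(z, x). Then for each y ∈ G the map z ↦ z·Δ(z, y) is an automorphism of G that induces the identity on G/Z(G) and on Z(G), and N = {ν(x) : x ∈ G} is a normal regular subgroup of Hol(G). -/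
section Finite

variable {G : Type*} [Group G] [Finite G]

theorem Submonoid.inv_mem_of_finite (S : Submonoid G) {x : G} (hx : x ∈ S) :
    x⁻¹ ∈ S := by
  obtain ⟨n, hn⟩ := mem_powers_iff_mem_zpowers.mpr (Subgroup.inv_mem _ (Subgroup.mem_zpowers x))
  exact hn ▸ pow_mem hx n

def Submonoid.toSubgroupOfFinite (S : Submonoid G) : Subgroup G :=
  { S with inv_mem' := S.inv_mem_of_finite }

end Finite

def Subgroup.IsRegular {α : Type*} (N : Subgroup (Equiv.Perm α)) : Prop :=
  ∀ x y : α, ∃! f : Equiv.Perm α, f ∈ N ∧ f x = y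

theorem Subgroup.isRegular_of_existsUnique_apply_eq {α : Type*} {N : Subgroup (Equiv.Perm α)}
    (o : α) (h : ∀ y, ∃! f : Equiv.Perm α, f ∈ N ∧ f o = y) : N.IsRegular := by
  intro x y
  obtain ⟨g, ⟨hgN, hgo⟩, -⟩ := h x
  obtain ⟨f, ⟨hfN, hfo⟩, hf⟩ := h y
  refine ⟨f * g⁻¹, ⟨N.mul_mem hfN (N.inv_mem hgN), ?_⟩, fun f' ⟨hf'N, hf'x⟩ => ?_⟩
  · simp [← hgo, hfo]
  · rw [eq_mul_inv_iff_mul_eq]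
    exact hf _ ⟨N.mul_mem hf'N hgN, by rw [Equiv.Perm.mul_apply, hgo, hf'x]⟩

section Holomorph

variable {G : Type*} [Group G]

theorem mem_RhoSubgroup_iff {f : Equiv.Perm G} :
    f ∈ RhoSubgroup G ↔ ∃ y, f = Equiv.mulRight y := by
  simp only [Equiv.ext_iff, Equiv.coe_mulRight]
  rfl

theorem toPerm_mul_mulRight (σ : MulAut G) (y : G) :
    MulAut.toPerm G σ * Equiv.mulRight y = Equiv.mulRight (σ y) * MulAut.toPerm G σ :=
  Equiv.ext fun z => map_mul σ z y

theorem mulRight_mem_Hol (c : G) : Equiv.mulRight c ∈ Hol G :=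
  Subgroup.le_normalizer (mem_RhoSubgroup_iff.mpr ⟨c, rfl⟩)

theorem toPerm_mem_Hol [Finite G] (σ : MulAut G) : MulAut.toPerm G σ ∈ Hol G := by
  refine Subgroup.mem_normalizer_fintype fun f hf => ?_
  obtain ⟨y, rfl⟩ := mem_RhoSubgroup_iff.mp hf
  rw [toPerm_mul_mulRight, mul_inv_cancel_right]
  exact mem_RhoSubgroup_iff.mpr ⟨σ y, rfl⟩

theorem exists_eq_mulRight_mul_toPerm_of_mem_Hol {h : Equiv.Perm G} (hh : h ∈ Hol G) :
    ∃ (c : G) (σ : MulAut G), h = Equiv.mulRight c * MulAut.toPerm G σ := by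
  have apply_mul : ∀ x y, h (x * y) = h x * ((h 1)⁻¹ * h y) := by
    intro x y
    have hconj := (Subgroup.mem_normalizer_iff.mp hh (Equiv.mulRight y)).mp
      (mem_RhoSubgroup_iff.mpr ⟨y, rfl⟩)
    obtain ⟨w, hw⟩ := mem_RhoSubgroup_iff.mp hconj
    have hw_apply : ∀ x, h (x * y) = h x * w := fun x => by
      simpa using congrArg (· (h x)) hw
    have hw_one := hw_apply 1
    rw [one_mul] at hw_one
    rw [hw_apply, hw_one, inv_mul_cancel_left]
  refine ⟨h 1,
    { toEquiv := h.trans (Equiv.mulRight (h 1)⁻¹), map_mul' := fun x y => ?_ }, ?_⟩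
  · show h (x * y) * (h 1)⁻¹ = h x * (h 1)⁻¹ * (h y * (h 1)⁻¹)
    simp only [apply_mul, mul_assoc]
  · ext z
    exact (inv_mul_cancel_right (h z) (h 1)).symm

end Holomorph

structure IsCentralBilinear {G : Type*} [Group G] (Δ : G → G → G) : Prop where
  mem_center : ∀ x y, Δ x y ∈ Subgroup.center G
  mul_left : ∀ x₁ x₂ y, Δ (x₁ * x₂) y = Δ x₁ y * Δ x₂ y
  mul_right : ∀ x y₁ y₂, Δ x (y₁ * y₂) = Δ x y₁ * Δ x y₂
  mul_center_left : ∀ x y z, z ∈ Subgroup.center G → Δ (x * z) y = Δ x y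

def IsAutEquivariant {G : Type*} [Group G] (Δ : G → G → G) : Prop :=
  ∀ (β : G ≃* G) (x y : G), Δ (β x) (β y) = β (Δ x y)

namespace IsCentralBilinear

variable {G : Type*} [Group G] {Δ : G → G → G}

theorem comm (hΔ : IsCentralBilinear Δ) (g x y : G) : g * Δ x y = Δ x y * g :=
  Subgroup.mem_center_iff.mp (hΔ.mem_center x y) g

theorem one_left (hΔ : IsCentralBilinear Δ) (y : G) : Δ 1 y = 1 :=
  mul_eq_left.mp (by rw [← hΔ.mul_left, one_mul])

theorem one_right (hΔ : IsCentralBilinear Δ) (x : G) : Δ x 1 = 1 :=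
  mul_eq_left.mp (by rw [← hΔ.mul_right, one_mul])

theorem eq_one_of_mem_center (hΔ : IsCentralBilinear Δ) {z : G} (hz : z ∈ Subgroup.center G)
    (y : G) : Δ z y = 1 := by
  simpa [hΔ.one_left] using hΔ.mul_center_left 1 y z hz

def toAut (hΔ : IsCentralBilinear Δ) (y : G) : MulAut G where
  toFun z := z * Δ z y
  invFun z := z * (Δ z y)⁻¹
  left_inv z := by
    simp only [hΔ.mul_center_left _ _ _ (hΔ.mem_center z y), mul_inv_cancel_right]
  right_inv z := by
    simp only [hΔ.mul_center_left _ _ _ (inv_mem (hΔ.mem_center z y)), inv_mul_cancel_right]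
  map_mul' a b := by
    rw [hΔ.mul_left, mul_assoc, mul_assoc, ← mul_assoc b, hΔ.comm b a y, mul_assoc]

@[simp]
theorem toAut_apply (hΔ : IsCentralBilinear Δ) (y z : G) : hΔ.toAut y z = z * Δ z y :=
  rfl

theorem toAut_one (hΔ : IsCentralBilinear Δ) : hΔ.toAut 1 = 1 := by
  ext z
  simp [hΔ.one_right]

theorem toAut_mul (hΔ : IsCentralBilinear Δ) (a b : G) :
    hΔ.toAut (a * b) = hΔ.toAut b * hΔ.toAut a := by
  ext z
  simp [hΔ.mul_right, hΔ.mul_center_left _ _ _ (hΔ.mem_center z a), mul_assoc]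

/-- Equivariance under the automorphisms `toAut y` forces `Δ` to vanish on its own values. -/
theorem apply_apply_right (hΔ : IsCentralBilinear Δ)
    (hequiv : IsAutEquivariant Δ) (a b y : G) :
    Δ a (Δ b y) = 1 := by
  have h := hequiv (hΔ.toAut y) a b
  simp only [toAut_apply, hΔ.mul_center_left _ _ _ (hΔ.mem_center a y), hΔ.mul_right,
    hΔ.eq_one_of_mem_center (hΔ.mem_center a b), mul_one] at h
  exact mul_eq_left.mp h

theorem toAut_apply_eq_one (hΔ : IsCentralBilinear Δ)
    (hequiv : IsAutEquivariant Δ) (a b : G) :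
    hΔ.toAut (Δ a b) = 1 := by
  ext z
  simp [hΔ.apply_apply_right hequiv]

/-- The paper's `ν(a)`; as `Equiv.Perm` multiplication is composition, `toAut a` acts first. -/
def nu (hΔ : IsCentralBilinear Δ) (a : G) : Equiv.Perm G :=
  Equiv.mulRight a * MulAut.toPerm G (hΔ.toAut a)

theorem nu_apply (hΔ : IsCentralBilinear Δ) (a z : G) : hΔ.nu a z = z * a * Δ z a := by
  show z * Δ z a * a = z * a * Δ z a
  rw [mul_assoc, ← hΔ.comm, mul_assoc]

theorem nu_apply_one (hΔ : IsCentralBilinear Δ) (a : G) : hΔ.nu a 1 = a := by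
  rw [nu_apply, one_mul, hΔ.one_left, mul_one]

theorem nu_one (hΔ : IsCentralBilinear Δ) : hΔ.nu 1 = 1 := by
  simp [nu, hΔ.toAut_one]

theorem nu_mul_nu (hΔ : IsCentralBilinear Δ)
    (hequiv : IsAutEquivariant Δ) (a b : G) :
    hΔ.nu a * hΔ.nu b = hΔ.nu (hΔ.toAut a b * a) := by
  have hAut : hΔ.toAut (hΔ.toAut a b * a) = hΔ.toAut a * hΔ.toAut b := by
    rw [hΔ.toAut_mul, toAut_apply, hΔ.toAut_mul, hΔ.toAut_apply_eq_one hequiv, one_mul]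
  calc hΔ.nu a * hΔ.nu b
      = Equiv.mulRight a * (MulAut.toPerm G (hΔ.toAut a) * Equiv.mulRight b) *
          MulAut.toPerm G (hΔ.toAut b) := by simp only [nu, mul_assoc]
    _ = Equiv.mulRight (hΔ.toAut a b * a) * MulAut.toPerm G (hΔ.toAut a * hΔ.toAut b) := by
        rw [toPerm_mul_mulRight, Equiv.mulRight_mul, map_mul]; simp only [mul_assoc]
    _ = hΔ.nu (hΔ.toAut a b * a) := by rw [nu, hAut]

def nuSubgroup [Finite G] (hΔ : IsCentralBilinear Δ)
    (hequiv : IsAutEquivariant Δ) : Subgroup (Equiv.Perm G) :=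
  Submonoid.toSubgroupOfFinite
    { carrier := Set.range hΔ.nu
      one_mem' := ⟨1, hΔ.nu_one⟩
      mul_mem' := by
        rintro _ _ ⟨a, rfl⟩ ⟨b, rfl⟩
        exact ⟨_, (hΔ.nu_mul_nu hequiv a b).symm⟩ }

theorem mem_nuSubgroup [Finite G] (hΔ : IsCentralBilinear Δ)
    (hequiv : IsAutEquivariant Δ) {f : Equiv.Perm G} :
    f ∈ hΔ.nuSubgroup hequiv ↔ ∃ a, hΔ.nu a = f :=
  Iff.rfl

theorem toPerm_mul_nu_mul_inv (hΔ : IsCentralBilinear Δ)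
    (hequiv : IsAutEquivariant Δ) (σ : MulAut G) (a : G) :
    MulAut.toPerm G σ * hΔ.nu a * (MulAut.toPerm G σ)⁻¹ = hΔ.nu (σ a) := by
  ext z
  show σ (hΔ.nu a (σ⁻¹ z)) = hΔ.nu (σ a) z
  rw [nu_apply, nu_apply, map_mul, map_mul, ← hequiv, MulAut.apply_inv_self]

theorem toPerm_mem_normalizer_nuSubgroup [Finite G] (hΔ : IsCentralBilinear Δ)
    (hequiv : IsAutEquivariant Δ) (σ : MulAut G) :
    MulAut.toPerm G σ ∈ Subgroup.normalizer (hΔ.nuSubgroup hequiv : Set (Equiv.Perm G)) :=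
  Subgroup.mem_normalizer_fintype fun _ ⟨a, ha⟩ =>
    ⟨σ a, by rw [← ha, hΔ.toPerm_mul_nu_mul_inv hequiv]⟩

theorem nuSubgroup_le_Hol [Finite G] (hΔ : IsCentralBilinear Δ)
    (hequiv : IsAutEquivariant Δ) :
    hΔ.nuSubgroup hequiv ≤ Hol G := by
  rintro _ ⟨a, rfl⟩
  exact mul_mem (mulRight_mem_Hol a) (toPerm_mem_Hol _)

/-- Since `ρ(c) = ν(c) ∘ (toAut c)⁻¹`, the holomorph is generated by `N` and `Aut(G)`. -/
theorem Hol_le_normalizer_nuSubgroup [Finite G] (hΔ : IsCentralBilinear Δ)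
    (hequiv : IsAutEquivariant Δ) :
    Hol G ≤ Subgroup.normalizer (hΔ.nuSubgroup hequiv : Set (Equiv.Perm G)) := by
  intro h hh
  obtain ⟨c, σ, rfl⟩ := exists_eq_mulRight_mul_toPerm_of_mem_Hol hh
  have hdecomp : Equiv.mulRight c * MulAut.toPerm G σ =
      hΔ.nu c * MulAut.toPerm G ((hΔ.toAut c)⁻¹ * σ) := by
    rw [nu, map_mul, map_inv, mul_assoc, mul_inv_cancel_left]
  rw [hdecomp]
  exact mul_mem (Subgroup.le_normalizer ⟨c, rfl⟩)
    (hΔ.toPerm_mem_normalizer_nuSubgroup hequiv _)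

theorem nuSubgroup_normal [Finite G] (hΔ : IsCentralBilinear Δ)
    (hequiv : IsAutEquivariant Δ) :
    ((hΔ.nuSubgroup hequiv).subgroupOf (Hol G)).Normal :=
  (Subgroup.normal_subgroupOf_iff_le_normalizer (hΔ.nuSubgroup_le_Hol hequiv)).mpr
    (hΔ.Hol_le_normalizer_nuSubgroup hequiv)

theorem nuSubgroup_isRegular [Finite G] (hΔ : IsCentralBilinear Δ)
    (hequiv : IsAutEquivariant Δ) :
    (hΔ.nuSubgroup hequiv).IsRegular := by
  refine Subgroup.isRegular_of_existsUnique_apply_eq 1 fun y =>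
    ⟨hΔ.nu y, ⟨⟨y, rfl⟩, hΔ.nu_apply_one y⟩, ?_⟩
  rintro _ ⟨⟨a, rfl⟩, ha⟩
  rw [← ha, hΔ.nu_apply_one]

end IsCentralBilinear

theorem stmt_7_general
    {G : Type*} [Group G] [Fintype G]
    (Δ : G → G → G)
    (hval : ∀ x y : G, Δ x y ∈ Subgroup.center G)
    (hleft : ∀ x y z : G, z ∈ Subgroup.center G → Δ (x * z) y = Δ x y)
    (hmul₁ : ∀ x₁ x₂ y : G, Δ (x₁ * x₂) y = Δ x₁ y * Δ x₂ y)
    (hmul₂ : ∀ x y₁ y₂ : G, Δ x (y₁ * y₂) = Δ x y₁ * Δ x y₂)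
    (hequiv : ∀ (β : G ≃* G) (x y : G), Δ (β x) (β y) = β (Δ x y)) :
    (∀ y : G, ∃ e : G ≃* G, (∀ z : G, e z = z * Δ z y) ∧
      (∀ g : G, e g * g⁻¹ ∈ Subgroup.center G) ∧
      (∀ z : G, z ∈ Subgroup.center G → e z = z)) ∧
    ∃ N : Subgroup (Equiv.Perm G),
      (∀ f : Equiv.Perm G, f ∈ N ↔ ∃ x : G, ∀ z : G, f z = z * x * Δ z x) ∧
      N ≤ Hol G ∧ (N.subgroupOf (Hol G)).Normal ∧
      (∀ x y : G, ∃! f : Equiv.Perm G, f ∈ N ∧ f x = y) := by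
  have hΔ : IsCentralBilinear Δ := ⟨hval, hmul₁, hmul₂, hleft⟩
  refine ⟨fun y => ⟨hΔ.toAut y, fun z => rfl, fun g => ?_, fun z hz => ?_⟩,
    hΔ.nuSubgroup hequiv, fun f => ?_, hΔ.nuSubgroup_le_Hol hequiv, hΔ.nuSubgroup_normal hequiv,
    hΔ.nuSubgroup_isRegular hequiv⟩
  · rw [hΔ.toAut_apply]
    exact Subgroup.Normal.conj_mem inferInstance _ (hval g y) g
  · rw [hΔ.toAut_apply, hΔ.eq_one_of_mem_center hz, mul_one]
  · simp only [hΔ.mem_nuSubgroup hequiv, Equiv.ext_iff, hΔ.nu_apply, eq_comm]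

/-- let `p` be an odd prime and `G` a finite `p`-group of class two.
Given a bilinear form `Δ : G/Z(G) × G/G' → Z(G)` which is `Aut(G)`-equivariant,
each map `z ↦ z·Δ(z, y)` is an automorphism of `G` inducing the identity on `G/Z(G)`
and on `Z(G)`, and the permutations `ν(x) : z ↦ z·x·Δ(z, x)` form a normal regular
subgroup of `Hol(G)`. -/
theorem stmt_7 {p : ℕ} (hp : p.Prime) (hodd : Odd p)
    {G : Type*} [Group G] [Fintype G] (hpG : IsPGroup p G)
    (hc2 : (⊤ : Subgroup G).lowerCentralSeries 2 = ⊥) (hc1 : (⊤ : Subgroup G).lowerCentralSeries 1 ≠ ⊥)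
    (Δ : G → G → G)
    (hval : ∀ x y : G, Δ x y ∈ Subgroup.center G)
    (hleft : ∀ x y z : G, z ∈ Subgroup.center G → Δ (x * z) y = Δ x y)
    (hright : ∀ x y w : G, w ∈ commutator G → Δ x (y * w) = Δ x y)
    (hmul₁ : ∀ x₁ x₂ y : G, Δ (x₁ * x₂) y = Δ x₁ y * Δ x₂ y)
    (hmul₂ : ∀ x y₁ y₂ : G, Δ x (y₁ * y₂) = Δ x y₁ * Δ x y₂)
    (hequiv : ∀ (β : G ≃* G) (x y : G), Δ (β x) (β y) = β (Δ x y)) :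
    (∀ y : G, ∃ e : G ≃* G, (∀ z : G, e z = z * Δ z y) ∧
      (∀ g : G, e g * g⁻¹ ∈ Subgroup.center G) ∧
      (∀ z : G, z ∈ Subgroup.center G → e z = z)) ∧
    ∃ N : Subgroup (Equiv.Perm G),
      (∀ f : Equiv.Perm G, f ∈ N ↔ ∃ x : G, ∀ z : G, f z = z * x * Δ z x) ∧
      N ≤ Hol G ∧ (N.subgroupOf (Hol G)).Normal ∧
      (∀ x y : G, ∃! f : Equiv.Perm G, f ∈ N ∧ f x = y) :=
  stmt_7_general Δ hval hleft hmul₁ hmul₂ hequiv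
end

section
/- Let p be an odd prime and let G be a finite p-group of nilpotency class two with G' = Z(G). Let Δ₁ and Δ₂ be bilinear forms on G with associated circle operations ∘₁ and ∘₂, and suppose the form (x, y) ↦ Δ₁(x, y)⁻¹·Δ₂(x, y) is symmetric. Then there exists a bijection θ: G → G with θ(x ∘₁ y) = θ(x) ∘₂ θ(y) for all x, y ∈ G; that is, the groups (G, ∘₁) and (G, ∘₂) are isomorphic. -/
/-- The commutator `[x, y] = x⁻¹ * y⁻¹ * x * y` in the paper's convention. -/
def pcomm {G : Type*} [Group G] (x y : G) : G := x⁻¹ * y⁻¹ * x * y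

open scoped commutatorElement in
theorem pcomm_mem_commutator {G : Type*} [Group G] (x y : G) :
    pcomm x y ∈ commutator G := by
  have h : pcomm x y = ⁅x⁻¹, y⁻¹⁆ := by
    simp [pcomm, commutatorElement_def, mul_assoc]
  rw [h, commutator_def]
  exact Subgroup.commutator_mem_commutator (Subgroup.mem_top _) (Subgroup.mem_top _)

/-- A bilinear form on a group `G` of class two with `G' = Z(G)`: a map
`Δ : G/G' × G/G' → G'` which is multiplicative in each variable. -/
def IsBilinearForm {G : Type*} [Group G] (Δ : G → G → G) : Prop :=
  (∀ x y : G, Δ x y ∈ commutator G) ∧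
  (∀ x y w : G, w ∈ commutator G → Δ (x * w) y = Δ x y) ∧
  (∀ x y w : G, w ∈ commutator G → Δ x (y * w) = Δ x y) ∧
  (∀ x₁ x₂ y : G, Δ (x₁ * x₂) y = Δ x₁ y * Δ x₂ y) ∧
  (∀ x y₁ y₂ : G, Δ x (y₁ * y₂) = Δ x y₁ * Δ x y₂)

/-- The circle operation `x ∘ y = x·y·Δ(x, y)` associated to a bilinear form `Δ`. -/
def circ {G : Type*} [Group G] (Δ : G → G → G) (x y : G) : G := x * y * Δ x y

/-- The circle inverse `x^{⊖1} = x⁻¹·Δ(x, x)`. -/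
def oinv {G : Type*} [Group G] (Δ : G → G → G) (x : G) : G := x⁻¹ * Δ x x

/-- The circle commutator `[x, y]_∘ = x^{⊖1} ∘ y^{⊖1} ∘ x ∘ y`. -/
def ocomm {G : Type*} [Group G] (Δ : G → G → G) (x y : G) : G :=
  circ Δ (circ Δ (circ Δ (oinv Δ x) (oinv Δ y)) x) y

/-!
Let `D = Δ₁⁻¹Δ₂`, a symmetric bilinear form with values in `G' = Z(G)`. Since `|G|` is odd,
squaring is invertible on `G'`, and `θ(x) = x · D(x, x)^{1/2}` is the required isomorphism:
`D(x ∘₁ y, x ∘₁ y) = D(x, x) D(x, y)² D(y, y)` by bilinearity and symmetry, so the square root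
produces exactly the correction `D(x, y) = Δ₁(x, y)⁻¹Δ₂(x, y)` that turns `∘₁` into `∘₂`.
Its inverse is `x ↦ x · D(x, x)^{-1/2}`, because `D(x, x)` depends only on `x` modulo `G'`.
-/

theorem IsPGroup.odd_card {p : ℕ} {G : Type*} [Group G] [Finite G] (hG : IsPGroup p G)
    (hp : Odd p) : Odd (Nat.card G) := by
  by_contra hcard
  obtain ⟨g, hg⟩ := exists_prime_orderOf_dvd_card' 2
    (even_iff_two_dvd.mp (Nat.not_odd_iff_even.mp hcard))
  obtain ⟨k, hk⟩ := hG g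
  exact (hp.pow (n := k)).not_two_dvd_nat (hg ▸ orderOf_dvd_of_pow_eq_one hk)

theorem exists_zpow_mul_zpow_self_of_odd_card {G : Type*} [Group G] [Finite G]
    (h : Odd (Nat.card G)) : ∃ m : ℤ, ∀ g : G, g ^ m * g ^ m = g := by
  obtain ⟨k, hk⟩ := h
  refine ⟨k + 1, fun g => ?_⟩
  rw [← zpow_add, show (k + 1 + (k + 1) : ℤ) = ((2 * k + 1 : ℕ) : ℤ) + 1 by push_cast; ring,
    zpow_add_one, zpow_natCast, ← hk, pow_card_eq_one', one_mul]

section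

variable {G : Type*} [Group G]

theorem mul_mul_mul_comm_of_mem_center {a : G} (ha : a ∈ Subgroup.center G) (x y b : G) :
    x * a * (y * b) = x * y * (a * b) := by
  rw [mul_assoc x a, ← mul_assoc a y, ← Subgroup.mem_center_iff.mp ha y, mul_assoc y,
    ← mul_assoc]

namespace IsBilinearForm

variable {Δ Δ₁ Δ₂ : G → G → G}

theorem mem_commutator (hΔ : IsBilinearForm Δ) (x y : G) : Δ x y ∈ commutator G :=
  hΔ.1 x y

theorem map_mul_commutator_left (hΔ : IsBilinearForm Δ) (x y : G) {w : G}
    (hw : w ∈ commutator G) : Δ (x * w) y = Δ x y :=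
  hΔ.2.1 x y w hw

theorem map_mul_commutator_right (hΔ : IsBilinearForm Δ) (x y : G) {w : G}
    (hw : w ∈ commutator G) : Δ x (y * w) = Δ x y :=
  hΔ.2.2.1 x y w hw

theorem map_mul_left (hΔ : IsBilinearForm Δ) (x₁ x₂ y : G) :
    Δ (x₁ * x₂) y = Δ x₁ y * Δ x₂ y :=
  hΔ.2.2.2.1 x₁ x₂ y

theorem map_mul_right (hΔ : IsBilinearForm Δ) (x y₁ y₂ : G) :
    Δ x (y₁ * y₂) = Δ x y₁ * Δ x y₂ :=
  hΔ.2.2.2.2 x y₁ y₂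

theorem map_mul_commutator (hΔ : IsBilinearForm Δ) (x y : G) {w : G}
    (hw : w ∈ commutator G) : Δ (x * w) (y * w) = Δ x y := by
  rw [hΔ.map_mul_commutator_left _ _ hw, hΔ.map_mul_commutator_right _ _ hw]

theorem mem_center (hZ : commutator G ≤ Subgroup.center G) (hΔ : IsBilinearForm Δ) (x y : G) :
    Δ x y ∈ Subgroup.center G :=
  hZ (hΔ.mem_commutator x y)

theorem inv_mul (hZ : commutator G ≤ Subgroup.center G) (h₁ : IsBilinearForm Δ₁)
    (h₂ : IsBilinearForm Δ₂) : IsBilinearForm fun x y => (Δ₁ x y)⁻¹ * Δ₂ x y := by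
  have inv_mul_mul_mul {a b c d : G} (hb : b ∈ Subgroup.center G) :
      (a * b)⁻¹ * (c * d) = a⁻¹ * c * (b⁻¹ * d) := by
    rw [mul_inv_rev, ← Subgroup.mem_center_iff.mp (inv_mem hb),
      mul_mul_mul_comm_of_mem_center (inv_mem hb)]
  refine ⟨fun x y => mul_mem (inv_mem (h₁.mem_commutator x y)) (h₂.mem_commutator x y),
    fun x y w hw => ?_, fun x y w hw => ?_, fun x₁ x₂ y => ?_, fun x y₁ y₂ => ?_⟩ <;> dsimp only
  · rw [h₁.map_mul_commutator_left _ _ hw, h₂.map_mul_commutator_left _ _ hw]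
  · rw [h₁.map_mul_commutator_right _ _ hw, h₂.map_mul_commutator_right _ _ hw]
  · rw [h₁.map_mul_left, h₂.map_mul_left, inv_mul_mul_mul (h₁.mem_center hZ _ _)]
  · rw [h₁.map_mul_right, h₂.map_mul_right, inv_mul_mul_mul (h₁.mem_center hZ _ _)]

end IsBilinearForm

def shear (D : G → G → G) (c : ℤ) (x : G) : G := x * D x x ^ c

theorem shear_shear {D : G → G → G} (hD : IsBilinearForm D) (c d : ℤ) (x : G) :
    shear D c (shear D d x) = shear D (c + d) x := by
  rw [shear, shear, hD.map_mul_commutator _ _ (zpow_mem (hD.mem_commutator x x) d), shear,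
    mul_assoc, ← zpow_add, add_comm]

theorem bijective_shear {D : G → G → G} (hD : IsBilinearForm D) (c : ℤ) :
    Function.Bijective (shear D c) :=
  Function.bijective_iff_has_inverse.mpr ⟨shear D (-c),
    fun x => by rw [shear_shear hD, neg_add_cancel, shear, zpow_zero, mul_one],
    fun x => by rw [shear_shear hD, add_neg_cancel, shear, zpow_zero, mul_one]⟩

theorem shear_circ (hZ : commutator G ≤ Subgroup.center G) {Δ₁ Δ₂ D : G → G → G}
    (h₁ : IsBilinearForm Δ₁) (hD : IsBilinearForm D) (hDsymm : ∀ x y, D x y = D y x)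
    (hΔ₂ : ∀ x y, Δ₂ x y = Δ₁ x y * D x y) {m : ℤ}
    (hm : ∀ z ∈ commutator G, z ^ m * z ^ m = z) (x y : G) :
    shear D m (circ Δ₁ x y) = circ Δ₂ (shear D m x) (shear D m y) := by
  have hcomm {a : G} (ha : a ∈ commutator G) (b : G) : Commute a b :=
    (Subgroup.mem_center_iff.mp (hZ ha) b).symm
  have hDmem := hD.mem_commutator
  have hDcirc : D (circ Δ₁ x y) (circ Δ₁ x y) ^ m = D x x ^ m * D x y * D y y ^ m := by
    rw [circ, hD.map_mul_commutator _ _ (h₁.mem_commutator x y), hD.map_mul_left,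
      hD.map_mul_right, hD.map_mul_right, hDsymm y x,
      (hcomm (mul_mem (hDmem x x) (hDmem x y)) _).mul_zpow, (hcomm (hDmem x x) _).mul_zpow,
      (hcomm (hDmem x y) _).mul_zpow, mul_assoc, ← mul_assoc (D x y ^ m), hm _ (hDmem x y),
      mul_assoc]
  have hA := zpow_mem (hDmem x x) m
  have hC := zpow_mem (hDmem y y) m
  rw [shear, hDcirc, circ, circ, shear, shear, hΔ₂, h₁.map_mul_commutator_left _ _ hA,
    h₁.map_mul_commutator_right _ _ hC, hD.map_mul_commutator_left _ _ hA,
    hD.map_mul_commutator_right _ _ hC, mul_mul_mul_comm_of_mem_center (hZ hA),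
    mul_assoc (x * y), mul_assoc (x * y), (hcomm (hDmem x y) _).right_comm]
  congr 1
  rw [← mul_assoc, (hcomm (h₁.mem_commutator x y) _).eq, mul_assoc]

end

theorem stmt_10_general {p : ℕ} (hodd : Odd p)
    {G : Type*} [Group G] [Fintype G] (hpG : IsPGroup p G)
    (hGZ : commutator G = Subgroup.center G)
    (Δ₁ Δ₂ : G → G → G) (hΔ₁ : IsBilinearForm Δ₁) (hΔ₂ : IsBilinearForm Δ₂)
    (hsym : ∀ x y : G, (Δ₁ x y)⁻¹ * Δ₂ x y = (Δ₁ y x)⁻¹ * Δ₂ y x) :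
    ∃ θ : G → G, Function.Bijective θ ∧
      ∀ x y : G, θ (circ Δ₁ x y) = circ Δ₂ (θ x) (θ y) := by
  obtain ⟨m, hm⟩ := exists_zpow_mul_zpow_self_of_odd_card (hpG.odd_card hodd)
  have hD := hΔ₁.inv_mul hGZ.le hΔ₂
  have hΔ₂_eq (x y : G) : Δ₂ x y = Δ₁ x y * ((Δ₁ x y)⁻¹ * Δ₂ x y) :=
    (mul_inv_cancel_left _ _).symm
  exact ⟨_, bijective_shear hD m, shear_circ hGZ.le hΔ₁ hD hsym hΔ₂_eq fun z _ => hm z⟩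

/-- if `Δ₁, Δ₂` are bilinear forms on `G` whose "difference"
`Δ₁⁻¹Δ₂` is symmetric, then the circle groups `(G, ∘₁)` and `(G, ∘₂)` are isomorphic. -/
theorem stmt_10 {p : ℕ} (hp : p.Prime) (hodd : Odd p)
    {G : Type*} [Group G] [Fintype G] (hpG : IsPGroup p G)
    (hc2 : (⊤ : Subgroup G).lowerCentralSeries 2 = ⊥) (hc1 : (⊤ : Subgroup G).lowerCentralSeries 1 ≠ ⊥)
    (hGZ : commutator G = Subgroup.center G)
    (Δ₁ Δ₂ : G → G → G) (hΔ₁ : IsBilinearForm Δ₁) (hΔ₂ : IsBilinearForm Δ₂)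
    (hsym : ∀ x y : G, (Δ₁ x y)⁻¹ * Δ₂ x y = (Δ₁ y x)⁻¹ * Δ₂ y x) :
    ∃ θ : G → G, Function.Bijective θ ∧
      ∀ x y : G, θ (circ Δ₁ x y) = circ Δ₂ (θ x) (θ y) :=
  stmt_10_general hodd hpG hGZ Δ₁ Δ₂ hΔ₁ hΔ₂ hsym
end

section
/- Let p be an odd prime and let G be a finite p-group of nilpotency class two with G' = Z(G). Let Δ be an anti-symmetric bilinear form on G with associated circle operation x ∘ y = x·y·Δ(x, y). Then the derived subgroup (G, ∘)' of the group (G, ∘) equals G' if and only if the subgroup of G' generated by the set {[x, y]·Δ(x, y)² : x, y ∈ G} is all of G'. -/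
/-- The derived subgroup of the circle group `(G, ∘)`, as a set: the smallest subset of
`G` containing all `∘`-commutators and closed under `∘` and `∘`-inversion. -/
def circDer {G : Type*} [Group G] (Δ : G → G → G) : Set G :=
  ⋂₀ {T : Set G | (∀ x y : G, ocomm Δ x y ∈ T) ∧
      (∀ a ∈ T, ∀ b ∈ T, circ Δ a b ∈ T) ∧ (∀ a ∈ T, oinv Δ a ∈ T)}

namespace IsBilinearForm

variable {G : Type*} [Group G] {Δ : G → G → G}

theorem one_left (hΔ : IsBilinearForm Δ) (y : G) : Δ 1 y = 1 :=
  (MonoidHom.mk' (Δ · y) (hΔ.2.2.2.1 · · y)).map_one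

theorem inv_left (hΔ : IsBilinearForm Δ) (x y : G) : Δ x⁻¹ y = (Δ x y)⁻¹ :=
  (MonoidHom.mk' (Δ · y) (hΔ.2.2.2.1 · · y)).map_inv x

theorem inv_right (hΔ : IsBilinearForm Δ) (x y : G) : Δ x y⁻¹ = (Δ x y)⁻¹ :=
  (MonoidHom.mk' (Δ x) (hΔ.2.2.2.2 x)).map_inv y

theorem eq_one_of_mem_left (hΔ : IsBilinearForm Δ) {w : G} (hw : w ∈ commutator G) (y : G) :
    Δ w y = 1 := by
  rw [← one_mul w, hΔ.2.1 1 y w hw, hΔ.one_left]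

theorem circ_eq_mul_of_mem (hΔ : IsBilinearForm Δ) {a : G} (ha : a ∈ commutator G) (b : G) :
    circ Δ a b = a * b := by
  rw [circ, hΔ.eq_one_of_mem_left ha, mul_one]

theorem oinv_eq_inv_of_mem (hΔ : IsBilinearForm Δ) {a : G} (ha : a ∈ commutator G) :
    oinv Δ a = a⁻¹ := by
  rw [oinv, hΔ.eq_one_of_mem_left ha, mul_one]

theorem circ_mul_left (hΔ : IsBilinearForm Δ) (hZ : commutator G ≤ Subgroup.center G)
    {w : G} (hw : w ∈ commutator G) (a b : G) : circ Δ (a * w) b = circ Δ a b * w := by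
  have hwc := Subgroup.mem_center_iff.mp (hZ hw)
  rw [circ, circ, hΔ.2.1 a b w hw, mul_assoc a, ← hwc, ← mul_assoc, mul_assoc _ w, ← hwc]
  simp only [mul_assoc]

theorem circ_mul_right (hΔ : IsBilinearForm Δ) (hZ : commutator G ≤ Subgroup.center G)
    {w : G} (hw : w ∈ commutator G) (a b : G) : circ Δ a (b * w) = circ Δ a b * w := by
  have hwc := Subgroup.mem_center_iff.mp (hZ hw)
  rw [circ, circ, hΔ.2.2.1 a b w hw, ← mul_assoc, mul_assoc _ w, ← hwc]
  simp only [mul_assoc]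

open scoped IsMulCommutative in
theorem ocomm_eq (hΔ : IsBilinearForm Δ) (hZ : commutator G ≤ Subgroup.center G)
    (hanti : ∀ x y : G, Δ y x = (Δ x y)⁻¹) (x y : G) :
    ocomm Δ x y = pcomm x y * Δ x y ^ 2 := by
  have hmem := hΔ.1
  rw [ocomm, oinv, oinv, circ_mul_left hΔ hZ (hmem x x), circ_mul_right hΔ hZ (hmem y y),
    circ_mul_left hΔ hZ (hmem x x), circ_mul_left hΔ hZ (hmem y y),
    circ_mul_left hΔ hZ (hmem x x), circ_mul_left hΔ hZ (hmem y y)]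
  have hinv : circ Δ x⁻¹ y⁻¹ = x⁻¹ * y⁻¹ * Δ x y := by
    rw [circ, hΔ.inv_left, hΔ.inv_right, inv_inv]
  rw [hinv, circ_mul_left hΔ hZ (hmem x y), circ_mul_left hΔ hZ (hmem x y),
    circ.eq_1 Δ (x⁻¹ * y⁻¹), circ_mul_left hΔ hZ (hmem _ _), circ, ← pcomm]
  simp only [hΔ.2.2.2.1, hΔ.inv_left, hanti x y, inv_inv, mul_assoc]
  congr 1
  have hcomm (a b c : Subgroup.center G) :
      c⁻¹ * (b⁻¹ * (c * (a⁻¹ * (c * (c * (b * a)))))) = c ^ 2 := by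
    apply Additive.ofMul.injective
    simp only [ofMul_mul, ofMul_inv, ofMul_pow]
    abel
  exact congrArg Subtype.val (hcomm ⟨_, hZ (hmem x x)⟩ ⟨_, hZ (hmem y y)⟩ ⟨_, hZ (hmem x y)⟩)

end IsBilinearForm

section CircDer

variable {G : Type*} [Group G] {Δ : G → G → G}

theorem circDer_subset {T : Set G} (hocomm : ∀ x y : G, ocomm Δ x y ∈ T)
    (hcirc : ∀ a ∈ T, ∀ b ∈ T, circ Δ a b ∈ T) (hoinv : ∀ a ∈ T, oinv Δ a ∈ T) :
    circDer Δ ⊆ T :=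
  Set.sInter_subset_of_mem ⟨hocomm, hcirc, hoinv⟩

theorem ocomm_mem_circDer (x y : G) : ocomm Δ x y ∈ circDer Δ :=
  Set.mem_sInter.mpr fun _ hT => hT.1 x y

theorem circ_mem_circDer {a b : G} (ha : a ∈ circDer Δ) (hb : b ∈ circDer Δ) :
    circ Δ a b ∈ circDer Δ :=
  Set.mem_sInter.mpr fun T hT =>
    hT.2.1 a (Set.mem_sInter.mp ha T hT) b (Set.mem_sInter.mp hb T hT)

theorem oinv_mem_circDer {a : G} (ha : a ∈ circDer Δ) : oinv Δ a ∈ circDer Δ :=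
  Set.mem_sInter.mpr fun T hT => hT.2.2 a (Set.mem_sInter.mp ha T hT)

theorem circDer_eq_closure (hΔ : IsBilinearForm Δ)
    (hocomm : ∀ x y : G, ocomm Δ x y ∈ commutator G) :
    circDer Δ = Subgroup.closure {g : G | ∃ x y : G, g = ocomm Δ x y} := by
  set H := Subgroup.closure {g : G | ∃ x y : G, g = ocomm Δ x y}
  have hH : H ≤ commutator G := (Subgroup.closure_le _).mpr fun _ ⟨x, y, hg⟩ => hg ▸ hocomm x y
  have hle : circDer Δ ⊆ H := circDer_subset
    (fun x y => Subgroup.subset_closure ⟨x, y, rfl⟩)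
    (fun a ha b hb => hΔ.circ_eq_mul_of_mem (hH ha) b ▸ H.mul_mem ha hb)
    (fun a ha => (hΔ.oinv_eq_inv_of_mem (hH ha)).symm ▸ H.inv_mem ha)
  have hD (a : G) (ha : a ∈ circDer Δ) : a ∈ commutator G := hH (hle ha)
  let D : Subgroup G :=
    { carrier := circDer Δ
      one_mem' := by
        simpa [ocomm, oinv, circ, hΔ.one_left] using ocomm_mem_circDer (Δ := Δ) 1 1
      mul_mem' := fun {a b} ha hb => hΔ.circ_eq_mul_of_mem (hD a ha) b ▸ circ_mem_circDer ha hb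
      inv_mem' := fun {a} ha => hΔ.oinv_eq_inv_of_mem (hD a ha) ▸ oinv_mem_circDer ha }
  refine hle.antisymm ((Subgroup.closure_le D).mpr ?_)
  rintro _ ⟨x, y, rfl⟩
  exact ocomm_mem_circDer x y

end CircDer

theorem stmt_13_general {G : Type*} [Group G]
    (hGZ : commutator G = Subgroup.center G)
    (Δ : G → G → G) (hΔ : IsBilinearForm Δ)
    (hanti : ∀ x y : G, Δ y x = (Δ x y)⁻¹) :
    circDer Δ = (commutator G : Set G) ↔
      Subgroup.closure {g : G | ∃ x y : G, g = pcomm x y * (Δ x y) ^ 2} = commutator G := by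
  have hocomm := hΔ.ocomm_eq hGZ.le hanti
  rw [circDer_eq_closure hΔ fun x y => hocomm x y ▸
    mul_mem (pcomm_mem_commutator x y) (pow_mem (hΔ.1 x y) 2)]
  simp only [hocomm, SetLike.coe_set_eq]

/-- for an anti-symmetric bilinear form `Δ` on `G`, the derived subgroup
`(G, ∘)'` of the circle group equals `G'` if and only if the subgroup of `G'` generated
by `{[x, y]·Δ(x, y)² : x, y ∈ G}` is all of `G'`. -/
theorem stmt_13 {p : ℕ} (hp : p.Prime) (hodd : Odd p)
    {G : Type*} [Group G] [Fintype G] (hpG : IsPGroup p G)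
    (hc2 : (⊤ : Subgroup G).lowerCentralSeries 2 = ⊥) (hc1 : (⊤ : Subgroup G).lowerCentralSeries 1 ≠ ⊥)
    (hGZ : commutator G = Subgroup.center G)
    (Δ : G → G → G) (hΔ : IsBilinearForm Δ)
    (hanti : ∀ x y : G, Δ y x = (Δ x y)⁻¹) :
    circDer Δ = (commutator G : Set G) ↔
      Subgroup.closure {g : G | ∃ x y : G, g = pcomm x y * (Δ x y) ^ 2} = commutator G :=
  stmt_13_general hGZ Δ hΔ hanti
end

section
/- Let p be an odd prime and let G be a finite p-group of nilpotency class two with G' = Z(G). Let σ be an endomorphism of G' such that the map τ: G' → G', τ(z) = z·σ(z)², is an automorphism of G', and let ∘ be the operation x ∘ y = x·y·σ([x, y]). Then G and (G, ∘) are isoclinic; more precisely: Z(G, ∘) = Z(G) = G'; the derived subgroup (G, ∘)' equals G'; the identity map on G induces an isomorphism G/Z(G) → (G, ∘)/Z(G, ∘); and τ is an isomorphism G' → (G, ∘)' satisfying τ([x, y]) = [x, y]_∘ for all x, y ∈ G. -/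
/-- The anti-symmetric bilinear form `Δ_σ(x, y) = σ([x, y])` associated to an
endomorphism `σ` of `G'`. -/
def deltaSigma {G : Type*} [Group G] (σ : ↥(commutator G) →* ↥(commutator G))
    (x y : G) : G :=
  ↑(σ ⟨pcomm x y, pcomm_mem_commutator x y⟩)

/-- The map `τ : z ↦ z·σ(z)²` on `G'`. -/
def tauFun {G : Type*} [Group G] (σ : ↥(commutator G) →* ↥(commutator G))
    (z : ↥(commutator G)) : ↥(commutator G) :=
  z * σ z ^ 2

/-!
In class two, `[x, y]` is central and multiplicative in each variable, so the correction terms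
`σ([·, ·])` of the three products in `x^{⊖1} ∘ y^{⊖1} ∘ x ∘ y` can be evaluated, giving
`[x, y]_∘ = [x, y]·σ([x, y])² = τ([x, y])`; similarly `x ∘ y = y ∘ x` exactly when
`τ([x, y]) = 1`, so injectivity of `τ` identifies the two centers. On the central subgroup `G'`
the operation `∘` is the product of `G`, hence the elements of `G'` whose `τ`-image lies in a
`∘`-subgroup containing all `∘`-commutators form a subgroup of `G` containing all commutators,
and surjectivity of `τ` gives `(G, ∘)' = G'`.
-/

open scoped commutatorElement

section ClassTwo

variable {G : Type*} [Group G]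

theorem pcomm_eq_commutatorElement (x y : G) : pcomm x y = ⁅x⁻¹, y⁻¹⁆ := by
  simp [pcomm, commutatorElement_def]

theorem pcomm_eq_one_iff_commute {x y : G} : pcomm x y = 1 ↔ Commute x y := by
  rw [pcomm_eq_commutatorElement, commutatorElement_eq_one_iff_commute, Commute.inv_inv_iff]

theorem pcomm_swap (x y : G) : pcomm y x = (pcomm x y)⁻¹ := by
  rw [pcomm_eq_commutatorElement, pcomm_eq_commutatorElement, commutatorElement_inv]

theorem commute_of_mem_commutator (hG : commutator G ≤ Subgroup.center G) {c : G}
    (hc : c ∈ commutator G) (g : G) : Commute c g :=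
  (Subgroup.mem_center_iff.mp (hG hc) g).symm

theorem pcomm_mul_left (hG : commutator G ≤ Subgroup.center G) (a b y : G) :
    pcomm (a * b) y = pcomm a y * pcomm b y := by
  have hc := commute_of_mem_commutator hG (pcomm_mem_commutator a y) b⁻¹
  calc pcomm (a * b) y = b⁻¹ * pcomm a y * (y⁻¹ * b * y) := by simp only [pcomm]; group
    _ = pcomm a y * pcomm b y := by rw [← hc.eq]; simp only [pcomm]; group

theorem pcomm_inv_left (hG : commutator G ≤ Subgroup.center G) (x y : G) :
    pcomm x⁻¹ y = (pcomm x y)⁻¹ := by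
  rw [eq_inv_iff_mul_eq_one, ← pcomm_mul_left hG, inv_mul_cancel, pcomm_eq_one_iff_commute]
  exact Commute.one_left y

theorem pcomm_inv_inv (hG : commutator G ≤ Subgroup.center G) (x y : G) :
    pcomm x⁻¹ y⁻¹ = pcomm x y := by
  rw [pcomm_inv_left hG, pcomm_swap y⁻¹ x, pcomm_inv_left hG, pcomm_swap x y]
  simp only [inv_inv]

theorem pcomm_mul_of_mem_commutator (hG : commutator G ≤ Subgroup.center G) {z : G}
    (hz : z ∈ commutator G) (a y : G) : pcomm (a * z) y = pcomm a y := by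
  rw [pcomm_mul_left hG, pcomm_eq_one_iff_commute.mpr (commute_of_mem_commutator hG hz y),
    mul_one]

end ClassTwo

section DeltaSigma

variable {G : Type*} [Group G] (σ : ↥(commutator G) →* ↥(commutator G))

theorem deltaSigma_mem (x y : G) : deltaSigma σ x y ∈ commutator G :=
  (σ ⟨pcomm x y, pcomm_mem_commutator x y⟩).2

theorem deltaSigma_congr {x y x' y' : G} (h : pcomm x y = pcomm x' y') :
    deltaSigma σ x y = deltaSigma σ x' y' :=
  congrArg _ (congrArg σ (Subtype.ext h))

theorem deltaSigma_of_commute {x y : G} (h : Commute x y) : deltaSigma σ x y = 1 := by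
  rw [deltaSigma, ← OneMemClass.coe_one (commutator G), Subtype.coe_inj, ← map_one σ]
  exact congrArg σ (Subtype.ext (pcomm_eq_one_iff_commute.mpr h))

theorem deltaSigma_swap (x y : G) : deltaSigma σ y x = (deltaSigma σ x y)⁻¹ := by
  rw [deltaSigma, deltaSigma, ← InvMemClass.coe_inv, ← map_inv]
  exact congrArg _ (congrArg σ (Subtype.ext (pcomm_swap x y)))

theorem circ_deltaSigma_of_commute {x y : G} (h : Commute x y) :
    circ (deltaSigma σ) x y = x * y := by
  rw [circ, deltaSigma_of_commute σ h, mul_one]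

theorem oinv_deltaSigma (x : G) : oinv (deltaSigma σ) x = x⁻¹ := by
  rw [oinv, deltaSigma_of_commute σ (Commute.refl x), mul_one]

theorem coe_tauFun_pcomm (x y : G) :
    (↑(tauFun σ ⟨pcomm x y, pcomm_mem_commutator x y⟩) : G) =
      pcomm x y * deltaSigma σ x y ^ 2 :=
  rfl

theorem tauFun_one : tauFun σ 1 = 1 := by
  rw [tauFun, map_one, one_pow, mul_one]

theorem circ_deltaSigma_comm_iff (x y : G) :
    circ (deltaSigma σ) x y = circ (deltaSigma σ) y x ↔
      tauFun σ ⟨pcomm x y, pcomm_mem_commutator x y⟩ = 1 := by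
  set d := deltaSigma σ x y
  have hword : pcomm x y * d ^ 2 = (y * x)⁻¹ * (x * y * d * d) := by
    simp only [pcomm, sq]; group
  rw [← OneMemClass.coe_eq_one, coe_tauFun_pcomm, circ, circ, deltaSigma_swap σ x y,
    eq_mul_inv_iff_mul_eq, hword, inv_mul_eq_one, eq_comm]

theorem ocomm_deltaSigma (hG : commutator G ≤ Subgroup.center G) (x y : G) :
    ocomm (deltaSigma σ) x y = ↑(tauFun σ ⟨pcomm x y, pcomm_mem_commutator x y⟩) := by
  set d := deltaSigma σ x y
  have hd_mem : d ∈ commutator G := deltaSigma_mem σ x y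
  have hd : ∀ g, Commute d g := commute_of_mem_commutator hG hd_mem
  -- the correction terms of the three `∘`-products in `((x⁻¹ ∘ y⁻¹) ∘ x) ∘ y`
  have corr₁ : deltaSigma σ x⁻¹ y⁻¹ = d := deltaSigma_congr σ (pcomm_inv_inv hG x y)
  have corr₂ : deltaSigma σ (x⁻¹ * y⁻¹ * d) x = d := by
    apply deltaSigma_congr
    rw [pcomm_mul_of_mem_commutator hG hd_mem, pcomm_mul_left hG, pcomm_inv_left hG,
      pcomm_inv_left hG, pcomm_eq_one_iff_commute.mpr (Commute.refl x), pcomm_swap x y]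
    simp only [inv_one, one_mul, inv_inv]
  have corr₃ : deltaSigma σ (x⁻¹ * y⁻¹ * d * x * d) y = 1 := by
    apply deltaSigma_of_commute
    rw [← pcomm_eq_one_iff_commute, pcomm_mul_of_mem_commutator hG hd_mem, pcomm_mul_left hG,
      pcomm_mul_of_mem_commutator hG hd_mem, pcomm_mul_left hG, pcomm_inv_left hG,
      pcomm_inv_left hG, pcomm_eq_one_iff_commute.mpr (Commute.refl y)]
    group
  rw [ocomm, circ, circ, circ, oinv_deltaSigma, oinv_deltaSigma, corr₁, corr₂, corr₃,
    coe_tauFun_pcomm]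
  calc x⁻¹ * y⁻¹ * d * x * d * y * 1 = x⁻¹ * y⁻¹ * (d * x) * (d * y) := by group
    _ = x⁻¹ * y⁻¹ * (x * d) * (y * d) := by rw [(hd x).eq, (hd y).eq]
    _ = x⁻¹ * y⁻¹ * x * (d * y) * d := by group
    _ = x⁻¹ * y⁻¹ * x * (y * d) * d := by rw [(hd y).eq]
    _ = pcomm x y * d ^ 2 := by rw [pcomm, sq]; group

theorem tauFun_mul (hG : commutator G ≤ Subgroup.center G) (z w : ↥(commutator G)) :
    tauFun σ (z * w) = tauFun σ z * tauFun σ w := by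
  have hcomm : ∀ a b : ↥(commutator G), Commute a b := fun a b =>
    Subtype.ext (commute_of_mem_commutator hG a.2 b)
  rw [tauFun, tauFun, tauFun, map_mul, (hcomm (σ z) (σ w)).mul_pow,
    (hcomm w (σ z ^ 2)).mul_mul_mul_comm]

def tauHom (hG : commutator G ≤ Subgroup.center G) :
    ↥(commutator G) →* ↥(commutator G) where
  toFun := tauFun σ
  map_one' := tauFun_one σ
  map_mul' := tauFun_mul σ hG

theorem tauHom_apply (hG : commutator G ≤ Subgroup.center G) (z : ↥(commutator G)) :
    tauHom σ hG z = tauFun σ z :=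
  rfl

theorem circ_comm_iff_mem_center (hτ : Function.Injective (tauFun σ)) (x : G) :
    (∀ y, circ (deltaSigma σ) x y = circ (deltaSigma σ) y x) ↔ x ∈ Subgroup.center G := by
  simp only [circ_deltaSigma_comm_iff, hτ.eq_iff' (tauFun_one σ), Subgroup.mk_eq_one,
    pcomm_eq_one_iff_commute, Subgroup.mem_center_iff]
  exact forall_congr' fun y => Commute.symm_iff

theorem tauFun_mem_of_circ_closed (hG : commutator G ≤ Subgroup.center G) {T : Set G}
    (hocomm : ∀ x y, ocomm (deltaSigma σ) x y ∈ T)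
    (hcirc : ∀ a ∈ T, ∀ b ∈ T, circ (deltaSigma σ) a b ∈ T)
    (hoinv : ∀ a ∈ T, oinv (deltaSigma σ) a ∈ T) (z : ↥(commutator G)) :
    (↑(tauFun σ z) : G) ∈ T := by
  let H : Subgroup G :=
    { carrier := {g | ∃ hg : g ∈ commutator G, (↑(tauFun σ ⟨g, hg⟩) : G) ∈ T}
      one_mem' := ⟨one_mem _, by
        simpa [ocomm_deltaSigma σ hG, pcomm] using hocomm 1 1⟩
      mul_mem' := by
        rintro a b ⟨ha, hTa⟩ ⟨hb, hTb⟩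
        refine ⟨mul_mem ha hb, ?_⟩
        have hab : (⟨a * b, mul_mem ha hb⟩ : ↥(commutator G)) = ⟨a, ha⟩ * ⟨b, hb⟩ := rfl
        rw [hab, tauFun_mul σ hG, Subgroup.coe_mul, ← circ_deltaSigma_of_commute σ
          (commute_of_mem_commutator hG (tauFun σ ⟨a, ha⟩).2 _)]
        exact hcirc _ hTa _ hTb
      inv_mem' := by
        rintro a ⟨ha, hTa⟩
        refine ⟨inv_mem ha, ?_⟩
        have ha' : (⟨a⁻¹, inv_mem ha⟩ : ↥(commutator G)) = (⟨a, ha⟩)⁻¹ := rfl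
        rw [ha', ← tauHom_apply σ hG, map_inv, InvMemClass.coe_inv, tauHom_apply,
          ← oinv_deltaSigma σ]
        exact hoinv _ hTa }
  have hle : commutator G ≤ H := by
    rw [commutator_eq_closure, Subgroup.closure_le]
    rintro _ ⟨a, b, rfl⟩
    have hab : ⁅a, b⁆ = pcomm a⁻¹ b⁻¹ := by rw [pcomm_eq_commutatorElement, inv_inv, inv_inv]
    refine ⟨hab ▸ pcomm_mem_commutator a⁻¹ b⁻¹, ?_⟩
    simp only [hab]
    rw [← ocomm_deltaSigma σ hG]
    exact hocomm _ _
  obtain ⟨_, hT⟩ := hle z.2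
  exact hT

theorem circDer_deltaSigma (hG : commutator G ≤ Subgroup.center G)
    (hτ : Function.Surjective (tauFun σ)) :
    circDer (deltaSigma σ) = (commutator G : Set G) := by
  apply Set.Subset.antisymm
  · intro g hg
    refine hg _ ⟨fun x y => ?_, fun a ha b hb => ?_, fun a ha => ?_⟩
    · rw [SetLike.mem_coe, ocomm_deltaSigma σ hG]
      exact (tauFun σ _).2
    · exact mul_mem (mul_mem ha hb) (deltaSigma_mem σ a b)
    · exact mul_mem (inv_mem ha) (deltaSigma_mem σ a a)
  · rintro g hg T ⟨hocomm, hcirc, hoinv⟩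
    obtain ⟨z, hz⟩ := hτ ⟨g, hg⟩
    simpa [hz] using tauFun_mem_of_circ_closed σ hG hocomm hcirc hoinv z

theorem circ_mul_inv_mul (hG : commutator G ≤ Subgroup.center G) (x y : G) :
    circ (deltaSigma σ) x y * (x * y)⁻¹ = deltaSigma σ x y := by
  rw [circ, ← (commute_of_mem_commutator hG (deltaSigma_mem σ x y) (x * y)).eq,
    mul_inv_cancel_right]

end DeltaSigma

theorem stmt_15_general
    {G : Type*} [Group G]
    (hGZ : commutator G = Subgroup.center G)
    (σ : ↥(commutator G) →* ↥(commutator G))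
    (hτ : Function.Bijective (tauFun σ)) :
    -- `Z(G, ∘) = Z(G) = G'`
    ({x : G | ∀ y : G, circ (deltaSigma σ) x y = circ (deltaSigma σ) y x} =
        (Subgroup.center G : Set G)) ∧
    (Subgroup.center G : Set G) = (commutator G : Set G) ∧
    -- `(G, ∘)' = G'`
    circDer (deltaSigma σ) = (commutator G : Set G) ∧
    -- the identity map induces an isomorphism `G/Z(G) → (G, ∘)/Z(G, ∘)`:
    -- `∘` agrees with the multiplication of `G` modulo the (common) center
    (∀ x y : G, circ (deltaSigma σ) x y * (x * y)⁻¹ ∈ Subgroup.center G) ∧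
    -- `x⁻¹·σ([x,x])` really is the `∘`-inverse of `x`
    (∀ x : G, circ (deltaSigma σ) x (oinv (deltaSigma σ) x) = 1 ∧
      circ (deltaSigma σ) (oinv (deltaSigma σ) x) x = 1) ∧
    -- `τ` is a homomorphism, hence (being bijective onto `(G, ∘)' = G'`, where `∘`
    -- coincides with the multiplication of `G`) an isomorphism `G' → (G, ∘)'`
    (∀ z w : ↥(commutator G), tauFun σ (z * w) = tauFun σ z * tauFun σ w) ∧
    (∀ z w : ↥(commutator G),
      circ (deltaSigma σ) (↑(tauFun σ z)) (↑(tauFun σ w)) = ↑(tauFun σ z) * ↑(tauFun σ w)) ∧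
    -- compatibility with commutators: `τ([x, y]) = [x, y]_∘`
    (∀ x y : G,
      (↑(tauFun σ ⟨pcomm x y, pcomm_mem_commutator x y⟩) : G) = ocomm (deltaSigma σ) x y) := by
  have hG : commutator G ≤ Subgroup.center G := hGZ.le
  refine ⟨Set.ext fun x => circ_comm_iff_mem_center σ hτ.1 x, by rw [hGZ],
    circDer_deltaSigma σ hG hτ.2, fun x y => ?_, fun x => ⟨?_, ?_⟩, tauFun_mul σ hG,
    fun z w => circ_deltaSigma_of_commute σ (commute_of_mem_commutator hG (tauFun σ z).2 _),
    fun x y => (ocomm_deltaSigma σ hG x y).symm⟩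
  · rw [circ_mul_inv_mul σ hG]
    exact hG (deltaSigma_mem σ x y)
  · rw [oinv_deltaSigma, circ_deltaSigma_of_commute σ (Commute.refl x).inv_right, mul_inv_cancel]
  · rw [oinv_deltaSigma, circ_deltaSigma_of_commute σ (Commute.refl x).inv_left, inv_mul_cancel]

/-- let `σ` be an endomorphism of `G'` such that `τ : z ↦ z·σ(z)²` is an
automorphism of `G'`, and let `x ∘ y = x·y·σ([x, y])`.  Then `G` and `(G, ∘)` are
isoclinic: `Z(G, ∘) = Z(G) = G'`, `(G, ∘)' = G'`, the identity map induces an isomorphism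
`G/Z(G) → (G, ∘)/Z(G, ∘)`, and `τ` is an isomorphism `G' → (G, ∘)'` with
`τ([x, y]) = [x, y]_∘`. -/
theorem stmt_15 {p : ℕ} (hp : p.Prime) (hodd : Odd p)
    {G : Type*} [Group G] [Fintype G] (hpG : IsPGroup p G)
    (hc2 : (⊤ : Subgroup G).lowerCentralSeries 2 = ⊥) (hc1 : (⊤ : Subgroup G).lowerCentralSeries 1 ≠ ⊥)
    (hGZ : commutator G = Subgroup.center G)
    (σ : ↥(commutator G) →* ↥(commutator G))
    (hτ : Function.Bijective (tauFun σ)) :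
    -- `Z(G, ∘) = Z(G) = G'`
    ({x : G | ∀ y : G, circ (deltaSigma σ) x y = circ (deltaSigma σ) y x} =
        (Subgroup.center G : Set G)) ∧
    (Subgroup.center G : Set G) = (commutator G : Set G) ∧
    -- `(G, ∘)' = G'`
    circDer (deltaSigma σ) = (commutator G : Set G) ∧
    -- the identity map induces an isomorphism `G/Z(G) → (G, ∘)/Z(G, ∘)`:
    -- `∘` agrees with the multiplication of `G` modulo the (common) center
    (∀ x y : G, circ (deltaSigma σ) x y * (x * y)⁻¹ ∈ Subgroup.center G) ∧
    -- `x⁻¹·σ([x,x])` really is the `∘`-inverse of `x`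
    (∀ x : G, circ (deltaSigma σ) x (oinv (deltaSigma σ) x) = 1 ∧
      circ (deltaSigma σ) (oinv (deltaSigma σ) x) x = 1) ∧
    -- `τ` is a homomorphism, hence (being bijective onto `(G, ∘)' = G'`, where `∘`
    -- coincides with the multiplication of `G`) an isomorphism `G' → (G, ∘)'`
    (∀ z w : ↥(commutator G), tauFun σ (z * w) = tauFun σ z * tauFun σ w) ∧
    (∀ z w : ↥(commutator G),
      circ (deltaSigma σ) (↑(tauFun σ z)) (↑(tauFun σ w)) = ↑(tauFun σ z) * ↑(tauFun σ w)) ∧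
    -- compatibility with commutators: `τ([x, y]) = [x, y]_∘`
    (∀ x y : G,
      (↑(tauFun σ ⟨pcomm x y, pcomm_mem_commutator x y⟩) : G) = ocomm (deltaSigma σ) x y) :=
  stmt_15_general hGZ σ hτ
end
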